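/- arXiv:2503.03337 — 7 statements merged into one kernel-verified Lean document; each statement's English description precedes it below -/
import Mathlib

section
/- Let T ∈ k(x)^{n×n}, θ = ∂_x + T, a ∈ k[x]^n, and ρ = dim_{k(x)} span(θ^i a : i ≥ 0). With den the least common denominator of T, d = deg den, D = deg(den·T), D̃ = max(d−1,D), d_a = deg a, there exists a nonzero tuple (η_0,…,η_ρ) ∈ k[x]^{ρ+1} with Σ_{i=0}^ρ η_i · θ^i a = 0 and each η_i of the form den^i · p_i with p_i ∈ k[x] of degree at most ρ d_a + (ρ(ρ+1)/2 − i)·D̃. -/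
/-!
Write `θ^i a = b_i / den^i` with polynomial numerators `b_i`; one application of `θ` gives
`b_{i+1} = den b_i' - i den' b_i + N b_i`, so `deg b_i ≤ d_a + i D̃`. The `ρ + 1` vectors
`b_0, …, b_ρ` lie in the `ρ`-dimensional space spanned by the `θ^i a`, hence are dependent, and
Cramer's rule yields a polynomial kernel vector `(q_i)` of signed maximal minors, with
`deg q_i ≤ ∑_{j ≠ i} (d_a + j D̃) = ρ d_a + (ρ(ρ+1)/2 - i) D̃`. Take `η_i = den^i q_i`.
-/

set_option synthInstance.maxHeartbeats 800000

open Polynomial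

/-- The standard derivative on the rational function field `k(x)`. -/
noncomputable def ratDeriv {k : Type*} [Field k] (f : RatFunc k) : RatFunc k :=
  algebraMap (Polynomial k) (RatFunc k)
      (derivative f.num * f.denom - f.num * derivative f.denom) /
    (algebraMap (Polynomial k) (RatFunc k) f.denom) ^ 2

/-- The pseudo-linear map `θ = ∂_x + T` on `k(x)^n`. -/
noncomputable def pseudoLin {k : Type*} [Field k] {n : ℕ}
    (T : Matrix (Fin n) (Fin n) (RatFunc k)) (v : Fin n → RatFunc k) : Fin n → RatFunc k :=
  (fun i => ratDeriv (v i)) + T.mulVec v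

open scoped Matrix

namespace Polynomial

theorem natDegree_mul_derivative_le {R : Type*} [Semiring R] (p q : R[X]) :
    (p * derivative q).natDegree ≤ (p.natDegree - 1) + q.natDegree := by
  rcases Nat.eq_zero_or_pos q.natDegree with hq | hq
  · simp [derivative_of_natDegree_zero hq]
  · have := natDegree_derivative_le q
    have := natDegree_mul_le (p := p) (q := derivative q)
    omega

end Polynomial

namespace Matrix

variable {R ι : Type*} [CommRing R] {m : ℕ}

def cofactorVec (M : Matrix ι (Fin (m + 1)) R) (e : Fin m → ι) (j : Fin (m + 1)) : R :=
  (-1) ^ (j : ℕ) * (M.submatrix e j.succAbove).det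

theorem cofactorVec_zero (M : Matrix ι (Fin (m + 1)) R) (e : Fin m → ι) :
    M.cofactorVec e 0 = (M.submatrix e Fin.succ).det := by
  simp [cofactorVec, Fin.succAbove_zero]

/-- Laplace expansion along the first row. -/
theorem sum_cofactorVec_mul (M : Matrix ι (Fin (m + 1)) R) (e : Fin m → ι) (s : ι) :
    ∑ j, M.cofactorVec e j * M s j = (M.submatrix (Fin.cons s e) id).det := by
  rw [det_succ_row_zero]
  refine Finset.sum_congr rfl fun j _ => ?_
  simp only [cofactorVec, submatrix_apply, id, Fin.cons_zero]
  have : (M.submatrix (Fin.cons s e) id).submatrix Fin.succ j.succAbove =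
      M.submatrix e j.succAbove := by
    ext; simp
  rw [this]
  ring

theorem exists_det_submatrix_ne_zero_of_linearIndependent [Nontrivial R] :
    ∀ {m : ℕ} (M : Matrix ι (Fin m) R), LinearIndependent R Mᵀ →
      ∃ e : Fin m → ι, (M.submatrix e id).det ≠ 0
  | 0, M, _ => ⟨Fin.elim0, by simp⟩
  | m + 1, M, hM => by
    obtain ⟨e, he⟩ := exists_det_submatrix_ne_zero_of_linearIndependent (M.submatrix id Fin.succ)
      (hM.comp Fin.succ (Fin.succ_injective m))
    have hq0 : M.cofactorVec e 0 ≠ 0 := by rwa [cofactorVec_zero]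
    obtain ⟨s, hs⟩ : ∃ s, ∑ j, M.cofactorVec e j * M s j ≠ 0 := by
      by_contra! h
      refine hq0 (Fintype.linearIndependent_iff.mp hM _ ?_ 0)
      funext s
      simpa [Finset.sum_apply] using h s
    exact ⟨Fin.cons s e, by rwa [← sum_cofactorVec_mul]⟩

theorem det_submatrix_eq_zero_of_not_linearIndependent [IsDomain R] {M : Matrix ι (Fin m) R}
    (hM : ¬ LinearIndependent R Mᵀ) (e : Fin m → ι) : (M.submatrix e id).det = 0 := by
  obtain ⟨v, hv, j, hj⟩ := Fintype.not_linearIndependent_iff.mp hM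
  refine exists_mulVec_eq_zero_iff.mp ⟨v, fun h => hj (congrFun h j), ?_⟩
  funext i
  simpa [mulVec, dotProduct, mul_comm, Finset.sum_apply] using congrFun hv (e i)

theorem natDegree_det_le_sum {n : Type*} [Fintype n] [DecidableEq n] (A : Matrix n n R[X])
    (c : n → ℕ) (h : ∀ i j, (A i j).natDegree ≤ c j) : A.det.natDegree ≤ ∑ j, c j := by
  rw [det_apply]
  refine natDegree_sum_le_of_forall_le _ _ fun σ _ => ?_
  rw [Units.smul_def, zsmul_eq_mul]
  refine natDegree_mul_le.trans ?_
  rw [natDegree_intCast, zero_add]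
  exact (natDegree_prod_le _ _).trans (Finset.sum_le_sum fun j _ => h (σ j) j)

theorem natDegree_cofactorVec_le (M : Matrix ι (Fin (m + 1)) R[X]) (e : Fin m → ι)
    (c : Fin (m + 1) → ℕ) (h : ∀ i j, (M i j).natDegree ≤ c j) (j : Fin (m + 1)) :
    (M.cofactorVec e j).natDegree ≤ ∑ j', c j' - c j := by
  rw [Fin.sum_univ_succAbove c j, Nat.add_sub_cancel_left, cofactorVec]
  refine natDegree_mul_le.trans ?_
  have hsign : ((-1 : R[X]) ^ (j : ℕ)).natDegree = 0 := by
    rw [← C_1, ← C_neg, ← C_pow, natDegree_C]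
  rw [hsign, zero_add]
  exact natDegree_det_le_sum _ _ fun i j' => h (e i) (j.succAbove j')

/-- Cramer's rule: the kernel vector is made of signed maximal minors, whence the degree bounds. -/
theorem exists_mulVec_eq_zero_natDegree_le [IsDomain R] :
    ∀ {m : ℕ} (M : Matrix ι (Fin m) R[X]) (c : Fin m → ℕ), (∀ i j, (M i j).natDegree ≤ c j) →
      ¬ LinearIndependent R[X] Mᵀ →
      ∃ q ≠ 0, M *ᵥ q = 0 ∧ ∀ j, (q j).natDegree ≤ ∑ j', c j' - c j
  | 0, _, _, _, hM => absurd linearIndependent_empty_type hM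
  | m + 1, M, c, hc, hM => by
    by_cases hind : LinearIndependent R[X] (M.submatrix id Fin.succ)ᵀ
    · obtain ⟨e, he⟩ := exists_det_submatrix_ne_zero_of_linearIndependent _ hind
      refine ⟨M.cofactorVec e, fun h => he ?_, ?_, natDegree_cofactorVec_le M e c hc⟩
      · exact (cofactorVec_zero M e).symm.trans (congrFun h 0)
      · funext s
        simp only [mulVec, dotProduct, mul_comm (M s _), sum_cofactorVec_mul, Pi.zero_apply]
        exact det_submatrix_eq_zero_of_not_linearIndependent hM _
    · obtain ⟨q, hq0, hMq, hq⟩ := exists_mulVec_eq_zero_natDegree_le (M.submatrix id Fin.succ)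
        (c ∘ Fin.succ) (fun i j => hc i j.succ) hind
      refine ⟨Fin.cons 0 q, fun h => hq0 ?_, ?_, Fin.cases (by simp) fun j => ?_⟩
      · exact congrArg Fin.tail h
      · funext s
        simpa [mulVec, dotProduct, Fin.sum_univ_succ] using congrFun hMq s
      · have := hq j
        simp only [Function.comp_apply] at this
        simp only [Fin.sum_univ_succ, Fin.cons_succ]
        omega

end Matrix

section PseudoLin

variable {k : Type*} [Field k]

local notation "ι" => algebraMap k[X] (RatFunc k)

theorem ratDeriv_algebraMap_div {p q : k[X]} (hq : q ≠ 0) :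
    ratDeriv (ι p / ι q) = ι (derivative p * q - p * derivative q) / ι (q ^ 2) := by
  set f := ι p / ι q
  have hf : f.num * q = p * f.denom := by
    apply IsFractionRing.injective k[X] (RatFunc k)
    rw [map_mul, map_mul, ← div_eq_div_iff (RatFunc.algebraMap_ne_zero f.denom_ne_zero)
      (RatFunc.algebraMap_ne_zero hq), RatFunc.num_div_denom]
  have hf' := congrArg derivative hf
  simp only [derivative_mul] at hf'
  rw [ratDeriv, ← map_pow,
    div_eq_div_iff (RatFunc.algebraMap_ne_zero (pow_ne_zero 2 f.denom_ne_zero))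
      (RatFunc.algebraMap_ne_zero (pow_ne_zero 2 hq)), ← map_mul, ← map_mul]
  congr 1
  linear_combination (f.denom * q) * hf' - (derivative f.denom * q + derivative q * f.denom) * hf

theorem ratDeriv_algebraMap_div_pow {b den : k[X]} (hden : den ≠ 0) (i : ℕ) :
    ratDeriv (ι b / ι (den ^ i)) =
      ι (den * derivative b - i * derivative den * b) / ι (den ^ (i + 1)) := by
  rw [ratDeriv_algebraMap_div (pow_ne_zero i hden), div_eq_div_iff
    (RatFunc.algebraMap_ne_zero (pow_ne_zero 2 (pow_ne_zero i hden)))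
    (RatFunc.algebraMap_ne_zero (pow_ne_zero (i + 1) hden)), ← map_mul, ← map_mul,
    derivative_pow, C_eq_natCast]
  congr 1
  rcases i with _ | i
  · simp [mul_comm]
  · push_cast [Nat.add_sub_cancel]
    ring

variable {n : ℕ}

/-- `θ^i a = pseudoLinNum den N a i / den^i` (`pseudoLin_iterate_apply`). -/
noncomputable def pseudoLinNum (den : k[X]) (N : Matrix (Fin n) (Fin n) k[X])
    (a : Fin n → k[X]) : ℕ → Fin n → k[X]
  | 0 => a
  | i + 1 => fun s =>
      den * derivative (pseudoLinNum den N a i s) - i * derivative den * pseudoLinNum den N a i s +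
        (N *ᵥ pseudoLinNum den N a i) s

theorem pseudoLin_iterate_apply {T : Matrix (Fin n) (Fin n) (RatFunc k)} {den : k[X]}
    (hden : den ≠ 0) {N : Matrix (Fin n) (Fin n) k[X]} (hTN : ∀ i j, T i j = ι (N i j) / ι den)
    (a : Fin n → k[X]) (i : ℕ) (s : Fin n) :
    (pseudoLin T)^[i] (fun s => ι (a s)) s = ι (pseudoLinNum den N a i s) / ι (den ^ i) := by
  induction i generalizing s with
  | zero => simp [pseudoLinNum]
  | succ i ih =>
    have hmul : (T *ᵥ (pseudoLin T)^[i] fun s => ι (a s)) s =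
        ι ((N *ᵥ pseudoLinNum den N a i) s) / ι (den ^ (i + 1)) := by
      simp only [Matrix.mulVec, dotProduct, ih, hTN, map_sum, Finset.sum_div]
      refine Finset.sum_congr rfl fun j _ => ?_
      rw [div_mul_div_comm, ← map_mul, ← map_mul, pow_succ']
    rw [Function.iterate_succ_apply', pseudoLin, Pi.add_apply, hmul, ih,
      ratDeriv_algebraMap_div_pow hden, ← add_div, ← map_add]
    rfl

theorem algebraMap_pow_smul_pseudoLin_iterate {T : Matrix (Fin n) (Fin n) (RatFunc k)}
    {den : k[X]} (hden : den ≠ 0) {N : Matrix (Fin n) (Fin n) k[X]}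
    (hTN : ∀ i j, T i j = ι (N i j) / ι den) (a : Fin n → k[X]) (i : ℕ) :
    ι (den ^ i) • (pseudoLin T)^[i] (fun s => ι (a s)) = fun s => ι (pseudoLinNum den N a i s) := by
  funext s
  rw [Pi.smul_apply, pseudoLin_iterate_apply hden hTN, smul_eq_mul,
    mul_div_cancel₀ _ (RatFunc.algebraMap_ne_zero (pow_ne_zero i hden))]

theorem natDegree_pseudoLinNum_le {den : k[X]} {N : Matrix (Fin n) (Fin n) k[X]} {a : Fin n → k[X]}
    {da D : ℕ} (hda : ∀ s, (a s).natDegree ≤ da) (hD : ∀ i j, (N i j).natDegree ≤ D) (i : ℕ)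
    (s : Fin n) :
    (pseudoLinNum den N a i s).natDegree ≤ da + i * max (den.natDegree - 1) D := by
  induction i generalizing s with
  | zero => simpa [pseudoLinNum] using hda s
  | succ i ih =>
    set b := pseudoLinNum den N a i
    have ih' : ∀ s, (b s).natDegree + max (den.natDegree - 1) D ≤
        da + (i + 1) * max (den.natDegree - 1) D := fun s => by
      have := ih s; rw [add_one_mul]; omega
    have h₁ : (den * derivative (b s)).natDegree ≤ da + (i + 1) * max (den.natDegree - 1) D := by
      have := natDegree_mul_derivative_le den (b s)
      have := ih' s
      omega
    have h₂ : ((i : k[X]) * derivative den * b s).natDegree ≤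
        da + (i + 1) * max (den.natDegree - 1) D := by
      have : ((i : k[X]) * derivative den).natDegree ≤ den.natDegree - 1 :=
        (natDegree_mul_le.trans_eq (by rw [natDegree_natCast, zero_add])).trans
          (natDegree_derivative_le den)
      have := natDegree_mul_le (p := (i : k[X]) * derivative den) (q := b s)
      have := ih' s
      omega
    have h₃ : ((N *ᵥ b) s).natDegree ≤ da + (i + 1) * max (den.natDegree - 1) D := by
      simp only [Matrix.mulVec, dotProduct]
      refine natDegree_sum_le_of_forall_le _ _ fun j _ => natDegree_mul_le.trans ?_
      have := hD s j
      have := ih' j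
      omega
    exact (natDegree_add_le _ _).trans
      (max_le ((natDegree_sub_le _ _).trans (max_le h₁ h₂)) h₃)

theorem not_linearIndependent_pseudoLinNum {T : Matrix (Fin n) (Fin n) (RatFunc k)} {den : k[X]}
    (hden : den ≠ 0) {N : Matrix (Fin n) (Fin n) k[X]} (hTN : ∀ i j, T i j = ι (N i j) / ι den)
    (a : Fin n → k[X]) :
    ¬ LinearIndependent k[X] fun j : Fin (Module.finrank (RatFunc k) (Submodule.span (RatFunc k)
      (Set.range fun i : ℕ => (pseudoLin T)^[i] (fun s => ι (a s)))) + 1) =>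
        pseudoLinNum den N a j := by
  set S := Submodule.span (RatFunc k) (Set.range fun i : ℕ => (pseudoLin T)^[i] (fun s => ι (a s)))
  intro hli
  have hmem (j : ℕ) : (fun s => ι (pseudoLinNum den N a j s)) ∈ S := by
    rw [← algebraMap_pow_smul_pseudoLin_iterate hden hTN]
    exact S.smul_mem _ (Submodule.subset_span ⟨j, rfl⟩)
  have hK : LinearIndependent (RatFunc k)
      fun j : Fin (Module.finrank (RatFunc k) S + 1) => fun s => ι (pseudoLinNum den N a j s) := by
    rw [← LinearIndependent.iff_fractionRing k[X]]
    exact hli.map' ((Algebra.linearMap k[X] (RatFunc k)).compLeft (Fin n))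
      (LinearMap.ker_eq_bot.mpr fun v w h => funext fun s =>
        IsFractionRing.injective k[X] (RatFunc k) (congrFun h s))
  have hle : Submodule.span (RatFunc k) (Set.range fun j : Fin (Module.finrank (RatFunc k) S + 1) =>
      fun s => ι (pseudoLinNum den N a j s)) ≤ S :=
    Submodule.span_le.mpr (Set.range_subset_iff.mpr fun j => hmem j)
  have := Submodule.finrank_mono hle
  rw [finrank_span_eq_card hK, Fintype.card_fin] at this
  omega

end PseudoLin

theorem Nat.sum_fin_add_mul_sub (r d e : ℕ) (i : Fin (r + 1)) :
    ∑ j : Fin (r + 1), (d + j * e) - (d + i * e) = r * d + (r * (r + 1) / 2 - i) * e := by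
  have hG : ∑ j : Fin (r + 1), (j : ℕ) = r * (r + 1) / 2 := by
    rw [Fin.sum_univ_eq_sum_range (fun j => j), Finset.sum_range_id, Nat.add_sub_cancel, mul_comm]
  have hi : (i : ℕ) ≤ r * (r + 1) / 2 := by
    refine (Nat.lt_succ_iff.mp i.isLt).trans (Nat.le_div_iff_mul_le two_pos |>.mpr ?_)
    rcases r with _ | r
    · simp
    · nlinarith
  rw [Finset.sum_add_distrib, ← Finset.sum_mul, hG, Finset.sum_const, Finset.card_univ,
    Fintype.card_fin, smul_eq_mul, add_one_mul, Nat.sub_mul]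
  have := Nat.mul_le_mul_right e hi
  omega

theorem exists_relation_cramer_bound_general (k : Type*) [Field k] (n : ℕ)
    (T : Matrix (Fin n) (Fin n) (RatFunc k))
    (den : Polynomial k) (hden : den ≠ 0)
    (N : Matrix (Fin n) (Fin n) (Polynomial k))
    (hTN : ∀ i j, T i j = algebraMap (Polynomial k) (RatFunc k) (N i j) /
      algebraMap (Polynomial k) (RatFunc k) den)
    (a : Fin n → Polynomial k) (da D : ℕ)
    (hda : ∀ idx, (a idx).natDegree ≤ da)
    (hD : ∀ i j, (N i j).natDegree ≤ D)
    (ρ : ℕ)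
    (hρ : ρ = Module.finrank (RatFunc k) (Submodule.span (RatFunc k)
      (Set.range fun i : ℕ =>
        (pseudoLin T)^[i] (fun s => algebraMap (Polynomial k) (RatFunc k) (a s))))) :
    ∃ η : Fin (ρ + 1) → Polynomial k, η ≠ 0 ∧
      (∑ i : Fin (ρ + 1), algebraMap (Polynomial k) (RatFunc k) (η i) •
        (pseudoLin T)^[(i : ℕ)] (fun s => algebraMap (Polynomial k) (RatFunc k) (a s))) = 0 ∧
      ∀ i : Fin (ρ + 1), ∃ p : Polynomial k, η i = den ^ (i : ℕ) * p ∧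
        p.natDegree ≤ ρ * da + (ρ * (ρ + 1) / 2 - (i : ℕ)) * max (den.natDegree - 1) D := by
  set B : Matrix (Fin n) (Fin (ρ + 1)) k[X] := Matrix.of fun s j => pseudoLinNum den N a j s
  obtain ⟨q, hq0, hBq, hq⟩ := Matrix.exists_mulVec_eq_zero_natDegree_le B
    (fun j => da + j * max (den.natDegree - 1) D)
    (fun s j => natDegree_pseudoLinNum_le hda hD j s)
    (by subst hρ; exact not_linearIndependent_pseudoLinNum hden hTN a)
  refine ⟨fun j => den ^ (j : ℕ) * q j, fun h => hq0 ?_, ?_, fun j => ⟨q j, rfl, ?_⟩⟩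
  · funext j
    exact (mul_eq_zero.mp (congrFun h j)).resolve_left (pow_ne_zero _ hden)
  · calc _ = ∑ j : Fin (ρ + 1), algebraMap k[X] (RatFunc k) (q j) •
          fun s => algebraMap k[X] (RatFunc k) (B s j) := by
          refine Finset.sum_congr rfl fun j _ => ?_
          dsimp only
          rw [mul_comm, map_mul, mul_smul, algebraMap_pow_smul_pseudoLin_iterate hden hTN]
          rfl
      _ = fun s => algebraMap k[X] (RatFunc k) ((B *ᵥ q) s) := by
          funext s
          simp [Matrix.mulVec, dotProduct, Finset.sum_apply, Algebra.smul_def, mul_comm]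
      _ = 0 := by funext s; simp [hBq]
  · exact (hq j).trans_eq (Nat.sum_fin_add_mul_sub ρ da _ j)

/-- Direct Cramer-rule bound: with `ρ = dim span(θ^i a)`, `den` the least common denominator
of `T`, `d = deg den`, `D = deg (den·T)`, `D̃ = max(d-1, D)`, `d_a = deg a`, there is a nonzero
tuple `(η_0, …, η_ρ)` with `∑ η_i θ^i a = 0`, where `η_i = den^i · p_i` and
`deg p_i ≤ ρ d_a + (ρ(ρ+1)/2 - i) D̃`. -/
theorem exists_relation_cramer_bound (k : Type*) [Field k] [CharZero k] (n : ℕ)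
    (T : Matrix (Fin n) (Fin n) (RatFunc k))
    (den : Polynomial k) (hden : den ≠ 0)
    (N : Matrix (Fin n) (Fin n) (Polynomial k))
    (hTN : ∀ i j, T i j = algebraMap (Polynomial k) (RatFunc k) (N i j) /
      algebraMap (Polynomial k) (RatFunc k) den)
    (a : Fin n → Polynomial k) (da D : ℕ)
    (hda : ∀ idx, (a idx).natDegree ≤ da)
    (hD : ∀ i j, (N i j).natDegree ≤ D)
    (ρ : ℕ)
    (hρ : ρ = Module.finrank (RatFunc k) (Submodule.span (RatFunc k)
      (Set.range fun i : ℕ =>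
        (pseudoLin T)^[i] (fun s => algebraMap (Polynomial k) (RatFunc k) (a s))))) :
    ∃ η : Fin (ρ + 1) → Polynomial k, η ≠ 0 ∧
      (∑ i : Fin (ρ + 1), algebraMap (Polynomial k) (RatFunc k) (η i) •
        (pseudoLin T)^[(i : ℕ)] (fun s => algebraMap (Polynomial k) (RatFunc k) (a s))) = 0 ∧
      ∀ i : Fin (ρ + 1), ∃ p : Polynomial k, η i = den ^ (i : ℕ) * p ∧
        p.natDegree ≤ ρ * da + (ρ * (ρ + 1) / 2 - (i : ℕ)) * max (den.natDegree - 1) D :=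
  exists_relation_cramer_bound_general k n T den hden N hTN a da D hda hD ρ hρ
end

section
/- Let R₁, R₂ ∈ k(x)^{m×p} be rational matrices and R = R₁ + R₂. Then for every ℓ ≥ 0, the determinantal denominator φ_ℓ(R) divides φ_ℓ(R₁)·φ_ℓ(R₂). If moreover φ_1(R₁) and φ_1(R₂) are coprime in k[x], then φ_ℓ(R) = φ_ℓ(R₁)·φ_ℓ(R₂). -/
/-!
Expanding `det (A + B)` multilinearly, first in the rows and then in the columns, writes it as a
sum of determinants of matrices that agree with `A` on a block `S × T`, with `B` on the
complementary block `Sᶜ × Tᶜ`, and vanish elsewhere. Such a determinant is `0` unless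
`|S| = |T|`, and is otherwise `± det A[S, T] * det B[Sᶜ, Tᶜ]`. So every minor of `R₁ + R₂` is an
integer combination of products of a minor of `R₁` and a minor of `R₂`, neither larger than it,
whence `φ_ℓ(R₁ + R₂) ∣ φ_ℓ(R₁) φ_ℓ(R₂)`.

For the equality: all entries of a minor of size `j` have denominator dividing `φ_1`, so
`φ_ℓ(Rᵢ) ∣ φ_1(Rᵢ)^ℓ` and `φ_ℓ(R₁)`, `φ_ℓ(R₂)` are coprime. Applying the divisibility to
`R₁ = (R₁ + R₂) + (-R₂)` gives `φ_ℓ(R₁) ∣ φ_ℓ(R₁ + R₂) φ_ℓ(R₂)`, hence `φ_ℓ(R₁) ∣ φ_ℓ(R₁ + R₂)`;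
likewise for `R₂`, and monicity turns the two divisibilities into an equality.
-/

open Polynomial

/-- The determinantal denominator `φ_ℓ(R)`: the monic least common denominator in `k[x]`
of all minors of the rational matrix `R` of size at most `ℓ` (with `φ_0(R) = 1`). -/
noncomputable def detDen {k : Type*} [Field k] [DecidableEq k] {m p : ℕ} (ℓ : ℕ)
    (R : Matrix (Fin m) (Fin p) (RatFunc k)) : Polynomial k :=
  (Finset.univ : Finset (Σ s : Fin (ℓ + 1), (Fin (s : ℕ) → Fin m) × (Fin (s : ℕ) → Fin p))).lcm
    (fun t => ((R.submatrix t.2.1 t.2.2).det).denom)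

namespace Matrix

variable {ι R : Type*} [Fintype ι] [DecidableEq ι] [CommRing R]

def piecewiseBlocks (p q : ι → Prop) [DecidablePred p] [DecidablePred q] (A B : Matrix ι ι R) :
    Matrix ι ι R :=
  of fun i j => if p i then (if q j then A i j else 0) else (if q j then 0 else B i j)

theorem det_add_eq_sum_det_piecewise (A B : Matrix ι ι R) :
    (A + B).det = ∑ s : Finset ι, (of fun i => if i ∈ s then A i else B i).det :=
  detRowAlternating.map_add_univ A B

theorem det_add_eq_sum_det_piecewiseBlocks (A B : Matrix ι ι R) :
    (A + B).det = ∑ s : Finset ι, ∑ t : Finset ι,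
      (piecewiseBlocks (· ∈ s) (· ∈ t) A B).det := by
  refine (det_add_eq_sum_det_piecewise A B).trans (Finset.sum_congr rfl fun s _ => ?_)
  have hsplit : (of fun i => if i ∈ s then A i else B i)ᵀ =
      (of fun i => if i ∈ s then A i else 0)ᵀ + (of fun i => if i ∈ s then 0 else B i)ᵀ := by
    ext i j; by_cases hj : j ∈ s <;> simp [hj]
  rw [← det_transpose, hsplit, det_add_eq_sum_det_piecewise]
  refine Finset.sum_congr rfl fun t _ => ?_
  rw [← det_transpose]
  congr 1
  ext i j
  by_cases hi : i ∈ s <;> by_cases hj : j ∈ t <;> simp [piecewiseBlocks, hi, hj]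

section Blocks

variable {N : Matrix ι ι R} {p q : ι → Prop} [DecidablePred p] [DecidablePred q]

theorem card_subtype_eq_of_det_ne_zero (hN : ∀ i j, (p i ↔ ¬q j) → N i j = 0)
    (hdet : N.det ≠ 0) : Fintype.card {i // p i} = Fintype.card {j // q j} := by
  obtain ⟨σ, -, hσ⟩ := Finset.exists_ne_zero_of_sum_ne_zero (det_apply N ▸ hdet)
  have hσ' : ∀ j, N (σ j) j ≠ 0 := fun j hj =>
    hσ (smul_eq_zero_of_right _ (Finset.prod_eq_zero (Finset.mem_univ j) hj))
  refine (Fintype.card_congr (σ.subtypeEquiv fun j => ?_)).symm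
  have := mt (hN (σ j) j) (hσ' j)
  tauto

theorem exists_det_eq_units_smul (hN : ∀ i j, (p i ↔ ¬q j) → N i j = 0)
    (e₁ : {i // p i} ≃ {j // q j}) (e₂ : {i // ¬p i} ≃ {j // ¬q j}) :
    ∃ ε : ℤˣ, N.det = ε • ((N.submatrix (↑) ((↑) ∘ e₁)).det *
      (N.submatrix (↑) ((↑) ∘ e₂)).det) := by
  set σ : Equiv.Perm ι :=
    (Equiv.sumCompl p).symm.trans ((e₁.sumCongr e₂).trans (Equiv.sumCompl q))
  have hσ₁ (x : {i // p i}) : σ x = e₁ x := by simp [σ, Equiv.sumCompl_symm_apply_pos]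
  have hσ₂ (x : {i // ¬p i}) : σ x = e₂ x := by simp [σ, Equiv.sumCompl_symm_apply_neg]
  refine ⟨Equiv.Perm.sign σ, ?_⟩
  have hblock : (N.submatrix id σ).det = (N.submatrix (↑) ((↑) ∘ e₁)).det *
      (N.submatrix (↑) ((↑) ∘ e₂)).det := by
    rw [twoBlockTriangular_det _ p]
    · congr 2 <;> ext x y <;> simp [toSquareBlockProp_def, hσ₁, hσ₂]
    · intro i hi j hj
      rw [submatrix_apply, id, hσ₁ ⟨j, hj⟩]
      exact hN i _ (iff_of_false hi (not_not.mpr (e₁ ⟨j, hj⟩).2))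
  rw [← hblock, det_permute', Units.smul_def, zsmul_eq_mul, ← mul_assoc, ← Int.cast_mul,
    ← Units.val_mul, Int.units_mul_self, Units.val_one, Int.cast_one, one_mul]

theorem det_mem_of_forall_det_submatrix_mul_mem (S : AddSubgroup R)
    (hN : ∀ i j, (p i ↔ ¬q j) → N i j = 0)
    (h : ∀ (e₁ : {i // p i} ≃ {j // q j}) (e₂ : {i // ¬p i} ≃ {j // ¬q j}),
      (N.submatrix (↑) ((↑) ∘ e₁)).det * (N.submatrix (↑) ((↑) ∘ e₂)).det ∈ S) :
    N.det ∈ S := by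
  by_cases hdet : N.det = 0
  · exact hdet ▸ zero_mem S
  have hcard := card_subtype_eq_of_det_ne_zero hN hdet
  have hcard' : Fintype.card {i // ¬p i} = Fintype.card {j // ¬q j} := by
    simp only [Fintype.card_subtype_compl, hcard]
  obtain ⟨ε, hε⟩ :=
    exists_det_eq_units_smul hN (Fintype.equivOfCardEq hcard) (Fintype.equivOfCardEq hcard')
  exact hε ▸ AddSubgroup.zsmul_mem _ (h _ _) _

end Blocks

theorem det_add_mem_of_det_submatrix_mul_mem (S : AddSubgroup R) (A B : Matrix ι ι R)
    (h : ∀ (p : ι → Prop) [DecidablePred p] (g₁ : {i // p i} → ι) (g₂ : {i // ¬p i} → ι),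
      (A.submatrix (↑) g₁).det * (B.submatrix (↑) g₂).det ∈ S) :
    (A + B).det ∈ S := by
  rw [det_add_eq_sum_det_piecewiseBlocks]
  refine sum_mem fun s _ => sum_mem fun t _ => ?_
  refine det_mem_of_forall_det_submatrix_mul_mem (p := (· ∈ s)) (q := (· ∈ t)) S
    (fun i j hij => ?_) fun e₁ e₂ => ?_
  · by_cases hi : i ∈ s <;> simp_all [piecewiseBlocks]
  · convert h (· ∈ s) ((↑) ∘ e₁) ((↑) ∘ e₂) using 3 <;> ext x y
    · simp [piecewiseBlocks, x.2, (e₁ y).2]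
    · simp [piecewiseBlocks, x.2, (e₂ y).2]

end Matrix

namespace RatFunc

variable {k : Type*} [Field k]

theorem mem_span_inv_algebraMap_iff {D : k[X]} (hD : D ≠ 0) {x : RatFunc k} :
    x ∈ Submodule.span k[X] {(algebraMap k[X] (RatFunc k) D)⁻¹} ↔ x.denom ∣ D := by
  rw [Submodule.mem_span_singleton, denom_dvd hD]
  simp only [Algebra.smul_def, div_eq_mul_inv, eq_comm]

theorem denom_neg_dvd (x : RatFunc k) : (-x).denom ∣ x.denom := by
  rw [denom_dvd (denom_ne_zero x)]
  exact ⟨-x.num, by rw [map_neg, neg_div, num_div_denom]⟩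

theorem denom_det_dvd_pow {ι : Type*} [Fintype ι] [DecidableEq ι] (M : Matrix ι ι (RatFunc k))
    {d : k[X]} (hd : d ≠ 0) (h : ∀ i j, (M i j).denom ∣ d) :
    M.det.denom ∣ d ^ Fintype.card ι := by
  choose P hP using fun i j => (denom_dvd hd).mp (h i j)
  have hM : M = (algebraMap k[X] (RatFunc k) d)⁻¹ •
      (Matrix.of P).map (algebraMap k[X] (RatFunc k)) := by
    ext i j
    rw [hP, Matrix.smul_apply, Matrix.map_apply, Matrix.of_apply, smul_eq_mul, div_eq_inv_mul]
  rw [denom_dvd (pow_ne_zero _ hd)]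
  refine ⟨(Matrix.of P).det, ?_⟩
  rw [hM, Matrix.det_smul, ← RingHom.mapMatrix_apply, ← RingHom.map_det, map_pow, inv_pow,
    div_eq_inv_mul]

end RatFunc

section DetDen

variable {k : Type*} [Field k] [DecidableEq k] {m p : ℕ}

theorem detDen_dvd_iff {ℓ : ℕ} {R : Matrix (Fin m) (Fin p) (RatFunc k)} {D : k[X]} :
    detDen ℓ R ∣ D ↔
      ∀ j ≤ ℓ, ∀ (f : Fin j → Fin m) (g : Fin j → Fin p), (R.submatrix f g).det.denom ∣ D := by
  refine ⟨fun h j hj f g => dvd_trans ?_ h, fun h => Finset.lcm_dvd fun t _ =>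
    h t.1 (Nat.lt_succ_iff.mp t.1.isLt) t.2.1 t.2.2⟩
  exact Finset.dvd_lcm (s := Finset.univ)
    (f := fun t : Σ s : Fin (ℓ + 1), (Fin s → Fin m) × (Fin s → Fin p) =>
      (R.submatrix t.2.1 t.2.2).det.denom)
    (b := ⟨⟨j, Nat.lt_succ_of_le hj⟩, f, g⟩) (Finset.mem_univ _)

theorem denom_det_submatrix_dvd_detDen {ℓ : ℕ} (R : Matrix (Fin m) (Fin p) (RatFunc k))
    {κ : Type*} [Fintype κ] [DecidableEq κ] (hκ : Fintype.card κ ≤ ℓ) (f : κ → Fin m)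
    (g : κ → Fin p) : (R.submatrix f g).det.denom ∣ detDen ℓ R := by
  rw [← Matrix.det_submatrix_equiv_self (Fintype.equivFin κ).symm, Matrix.submatrix_submatrix]
  exact detDen_dvd_iff.mp dvd_rfl _ hκ _ _

theorem denom_apply_dvd_detDen_one (R : Matrix (Fin m) (Fin p) (RatFunc k)) (i : Fin m)
    (j : Fin p) : (R i j).denom ∣ detDen 1 R := by
  simpa using denom_det_submatrix_dvd_detDen R (κ := Unit) le_rfl (fun _ => i) (fun _ => j)

theorem detDen_ne_zero (ℓ : ℕ) (R : Matrix (Fin m) (Fin p) (RatFunc k)) : detDen ℓ R ≠ 0 := by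
  rw [detDen, Ne, Finset.lcm_eq_zero_iff]
  rintro ⟨t, -, ht⟩
  exact RatFunc.denom_ne_zero _ ht

theorem detDen_monic (ℓ : ℕ) (R : Matrix (Fin m) (Fin p) (RatFunc k)) : (detDen ℓ R).Monic := by
  rw [detDen, ← Finset.normalize_lcm]
  exact Polynomial.monic_normalize (detDen_ne_zero ℓ R)

theorem detDen_add_dvd (ℓ : ℕ) (R₁ R₂ : Matrix (Fin m) (Fin p) (RatFunc k)) :
    detDen ℓ (R₁ + R₂) ∣ detDen ℓ R₁ * detDen ℓ R₂ := by
  have hD := mul_ne_zero (detDen_ne_zero ℓ R₁) (detDen_ne_zero ℓ R₂)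
  refine detDen_dvd_iff.mpr fun j hj f g => ?_
  rw [← RatFunc.mem_span_inv_algebraMap_iff hD,
    show (R₁ + R₂).submatrix f g = R₁.submatrix f g + R₂.submatrix f g from rfl]
  refine Matrix.det_add_mem_of_det_submatrix_mul_mem
    (Submodule.span k[X] {(algebraMap k[X] (RatFunc k) _)⁻¹}).toAddSubgroup _ _
    fun q _ g₁ g₂ => ?_
  have hq : Fintype.card {i // q i} ≤ ℓ := (Fintype.card_subtype_le _).trans (by simpa using hj)
  have hq' : Fintype.card {i // ¬q i} ≤ ℓ := (Fintype.card_subtype_le _).trans (by simpa using hj)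
  rw [Submodule.mem_toAddSubgroup, RatFunc.mem_span_inv_algebraMap_iff hD,
    Matrix.submatrix_submatrix, Matrix.submatrix_submatrix]
  exact (RatFunc.denom_mul_dvd _ _).trans (mul_dvd_mul
    (denom_det_submatrix_dvd_detDen R₁ hq _ _) (denom_det_submatrix_dvd_detDen R₂ hq' _ _))

theorem detDen_neg_dvd (ℓ : ℕ) (R : Matrix (Fin m) (Fin p) (RatFunc k)) :
    detDen ℓ (-R) ∣ detDen ℓ R := by
  refine detDen_dvd_iff.mpr fun j hj f g => ?_
  rw [show (-R).submatrix f g = -R.submatrix f g from rfl, Matrix.det_neg]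
  have hR := denom_det_submatrix_dvd_detDen R (by simpa using hj) f g
  rcases neg_one_pow_eq_or (RatFunc k) (Fintype.card (Fin j)) with h | h
  · rwa [h, one_mul]
  · rw [h, neg_one_mul]
    exact (RatFunc.denom_neg_dvd _).trans hR

theorem detDen_dvd_detDen_one_pow (ℓ : ℕ) (R : Matrix (Fin m) (Fin p) (RatFunc k)) :
    detDen ℓ R ∣ detDen 1 R ^ ℓ := by
  refine detDen_dvd_iff.mpr fun j hj f g => ?_
  refine (RatFunc.denom_det_dvd_pow _ (detDen_ne_zero 1 R) fun x y => ?_).trans ?_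
  · exact denom_apply_dvd_detDen_one R (f x) (g y)
  · exact pow_dvd_pow _ (by simpa using hj)

theorem isCoprime_detDen_of_isCoprime_detDen_one (ℓ : ℕ)
    {R₁ R₂ : Matrix (Fin m) (Fin p) (RatFunc k)} (h : IsCoprime (detDen 1 R₁) (detDen 1 R₂)) :
    IsCoprime (detDen ℓ R₁) (detDen ℓ R₂) :=
  ((h.pow (m := ℓ) (n := ℓ)).of_isCoprime_of_dvd_left
    (detDen_dvd_detDen_one_pow ℓ R₁)).of_isCoprime_of_dvd_right (detDen_dvd_detDen_one_pow ℓ R₂)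

theorem detDen_dvd_detDen_add_mul (ℓ : ℕ) (R₁ R₂ : Matrix (Fin m) (Fin p) (RatFunc k)) :
    detDen ℓ R₁ ∣ detDen ℓ (R₁ + R₂) * detDen ℓ R₂ := by
  have h := detDen_add_dvd ℓ (R₁ + R₂) (-R₂)
  rw [add_neg_cancel_right] at h
  exact h.trans (mul_dvd_mul_left _ (detDen_neg_dvd ℓ R₂))

end DetDen

/-- Determinantal denominators of a sum: φ_ℓ(R₁ + R₂) divides φ_ℓ(R₁)·φ_ℓ(R₂),
with equality when φ_1(R₁) and φ_1(R₂) are coprime. -/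
theorem detDen_add (k : Type*) [Field k] [DecidableEq k] (m p : ℕ)
    (R₁ R₂ : Matrix (Fin m) (Fin p) (RatFunc k)) (ℓ : ℕ) :
    detDen ℓ (R₁ + R₂) ∣ detDen ℓ R₁ * detDen ℓ R₂ ∧
      (IsCoprime (detDen 1 R₁) (detDen 1 R₂) →
        detDen ℓ (R₁ + R₂) = detDen ℓ R₁ * detDen ℓ R₂) := by
  refine ⟨detDen_add_dvd ℓ R₁ R₂, fun hcop => ?_⟩
  have hcopℓ := isCoprime_detDen_of_isCoprime_detDen_one ℓ hcop
  have h₁ : detDen ℓ R₁ ∣ detDen ℓ (R₁ + R₂) :=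
    hcopℓ.dvd_of_dvd_mul_right (detDen_dvd_detDen_add_mul ℓ R₁ R₂)
  have h₂ : detDen ℓ R₂ ∣ detDen ℓ (R₁ + R₂) := by
    rw [add_comm]
    exact hcopℓ.symm.dvd_of_dvd_mul_right (detDen_dvd_detDen_add_mul ℓ R₂ R₁)
  exact Polynomial.eq_of_monic_of_associated (detDen_monic ℓ _)
    ((detDen_monic ℓ R₁).mul (detDen_monic ℓ R₂))
    (associated_of_dvd_dvd (detDen_add_dvd ℓ R₁ R₂) (hcopℓ.mul_dvd h₁ h₂))
end

section
/- Let T = W + X M^{-1} Y with W, X, M, Y polynomial matrices over k[x] of sizes n×n, n×m, m×m, m×n and M non-singular. Then for every ℓ ≥ 0, the determinantal denominator φ_ℓ(T) divides det M. -/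
open Polynomial

/-- For any realisation T = W + X M⁻¹ Y with polynomial matrices and M non-singular,
every determinantal denominator φ_ℓ(T) divides det M. -/
theorem detDen_realisation_dvd_det (k : Type*) [Field k] [DecidableEq k] (n m : ℕ)
    (W : Matrix (Fin n) (Fin n) (Polynomial k)) (X : Matrix (Fin n) (Fin m) (Polynomial k))
    (M : Matrix (Fin m) (Fin m) (Polynomial k)) (Y : Matrix (Fin m) (Fin n) (Polynomial k))
    (hM : M.det ≠ 0)
    (T : Matrix (Fin n) (Fin n) (RatFunc k))
    (hT : T = W.map (algebraMap (Polynomial k) (RatFunc k)) +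
      X.map (algebraMap (Polynomial k) (RatFunc k)) *
        (M.map (algebraMap (Polynomial k) (RatFunc k)))⁻¹ *
        Y.map (algebraMap (Polynomial k) (RatFunc k))) :
    ∀ ℓ : ℕ, detDen ℓ T ∣ M.det := by
  intro ℓ
  apply Finset.lcm_dvd
  rintro ⟨s, r, c⟩ -
  set f : Polynomial k →+* RatFunc k := algebraMap (Polynomial k) (RatFunc k) with hf
  have hfd : f M.det ≠ 0 := by
    simpa using (map_ne_zero_iff f (IsFractionRing.injective _ _)).mpr hM
  have hdet : ((M.map f).det) = f M.det := (RingHom.map_det f M).symm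
  have hU : IsUnit (M.map f).det := by rw [hdet]; exact isUnit_iff_ne_zero.mpr hfd
  haveI : Invertible (M.map f) := (M.map f).invertibleOfIsUnitDet hU
  rw [RatFunc.denom_dvd hM]
  refine ⟨(Matrix.fromBlocks M (Y.submatrix id c) (-(X.submatrix r id))
      (W.submatrix r c)).det, ?_⟩
  have hmap : (Matrix.fromBlocks M (Y.submatrix id c) (-(X.submatrix r id))
      (W.submatrix r c)).map f =
      Matrix.fromBlocks (M.map f) ((Y.map f).submatrix id c)
        (-((X.map f).submatrix r id)) ((W.map f).submatrix r c) := by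
    ext i j
    cases i <;> cases j <;>
      simp [Matrix.fromBlocks, Matrix.submatrix_map, Matrix.map_apply]
  have hbig : f (Matrix.fromBlocks M (Y.submatrix id c) (-(X.submatrix r id))
      (W.submatrix r c)).det =
      f M.det * ((T.submatrix r c).det) := by
    rw [RingHom.map_det, RingHom.mapMatrix_apply, hmap, Matrix.det_fromBlocks₁₁, hdet]
    congr 1
    rw [Matrix.invOf_eq_nonsing_inv]
    have : T.submatrix r c = (W.map f).submatrix r c -
        (-((X.map f).submatrix r id)) * (M.map f)⁻¹ * ((Y.map f).submatrix id c) := by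
      rw [hT]
      ext i j
      simp [Matrix.submatrix_apply, Matrix.add_apply, Matrix.mul_apply, Matrix.neg_apply,
        Finset.sum_mul, sub_eq_add_neg, mul_assoc]
    rw [this]
  rw [eq_div_iff hfd, mul_comm, ← hbig]
end

section
/- Let q ∈ k[x,y] be square-free with respect to y, of degree d_x in x and d_y in y. The resultant res_y(q, ∂_y q) has maximal possible degree (2d_y − 1)d_x in x if and only if the coefficient of x^{d_x} in q (a polynomial in y) has degree exactly d_y and is square-free. -/
open Polynomial

/-- The Sylvester matrix of `p` (taken with degree `m`) and `q` (taken with degree `n`):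
the `(m+n) × (m+n)` matrix whose first `n` columns are the shifts of `p` and whose last
`m` columns are the shifts of `q`, in the monomial basis. -/
def sylv {R : Type*} [CommRing R] (m n : ℕ) (p q : Polynomial R) :
    Matrix (Fin (m + n)) (Fin (m + n)) R :=
  Matrix.of fun i j =>
    if (j : ℕ) < n then
      (if (j : ℕ) ≤ (i : ℕ) then p.coeff ((i : ℕ) - (j : ℕ)) else 0)
    else
      (if (j : ℕ) - n ≤ (i : ℕ) then q.coeff ((i : ℕ) - ((j : ℕ) - n)) else 0)

section Field
variable {F : Type*} [Field F]

noncomputable def polyOf (c : ℕ → F) (n : ℕ) : F[X] :=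
  ∑ j ∈ Finset.range n, C (c j) * X ^ j

lemma polyOf_coeff (c : ℕ → F) (n t : ℕ) :
    (polyOf c n).coeff t = if t < n then c t else 0 := by
  simp only [polyOf, finset_sum_coeff, coeff_C_mul, coeff_X_pow, mul_ite, mul_one, mul_zero]
  rw [Finset.sum_ite_eq (Finset.range n) t c]
  simp [Finset.mem_range]

lemma polyOf_degree_lt (c : ℕ → F) (n : ℕ) : (polyOf c n).degree < (n : WithBot ℕ) := by
  have bot_lt_n : (⊥ : WithBot ℕ) < (n : WithBot ℕ) := by
    exact_mod_cast WithBot.bot_lt_coe n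
  apply lt_of_le_of_lt (degree_sum_le _ _)
  refine (Finset.sup_lt_iff bot_lt_n).mpr ?_
  intro j hj
  exact lt_of_le_of_lt (degree_C_mul_X_pow_le _ _)
    (by exact_mod_cast Finset.mem_range.mp hj)

lemma polyOf_mul_degree_lt (c : ℕ → F) (n : ℕ) {p : F[X]} {m : ℕ} (hp : p.natDegree ≤ m) :
    (polyOf c n * p).degree < ((n + m : ℕ) : WithBot ℕ) := by
  rcases eq_or_ne (polyOf c n * p) 0 with h | h
  · rw [h, degree_zero]; exact WithBot.bot_lt_coe _
  · obtain ⟨ha, hb⟩ := mul_ne_zero_iff.mp h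
    rw [degree_mul, degree_eq_natDegree ha, degree_eq_natDegree hb, ← Nat.cast_add]
    have h1 : (polyOf c n).natDegree < n := (natDegree_lt_iff_degree_lt ha).mpr (polyOf_degree_lt c n)
    exact_mod_cast by omega

lemma polyOf_mul_coeff (c : ℕ → F) (n : ℕ) (p : F[X]) (i : ℕ) :
    (polyOf c n * p).coeff i
      = ∑ j ∈ Finset.range n, (if j ≤ i then p.coeff (i - j) else 0) * c j := by
  rw [polyOf, Finset.sum_mul, finset_sum_coeff]
  refine Finset.sum_congr rfl fun j _ => ?_
  rw [mul_right_comm, coeff_mul_X_pow']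
  split_ifs <;> simp [coeff_C_mul, mul_comm]

lemma sum_range_add' {M : Type*} [AddCommMonoid M] (f : ℕ → M) (n m : ℕ) :
    ∑ t ∈ Finset.range (m + n), f t
      = (∑ t ∈ Finset.range n, f t) + ∑ t ∈ Finset.range m, f (n + t) := by
  rw [show m + n = n + m from Nat.add_comm m n, Finset.range_eq_Ico,
    ← Finset.sum_Ico_consecutive _ (Nat.zero_le n) (Nat.le_add_right n m),
    ← Finset.range_eq_Ico, Finset.sum_Ico_eq_sum_range, Nat.add_sub_cancel_left]

lemma sylv_mulVec (m n : ℕ) (p r : F[X]) (v : Fin (m + n) → F) (i : Fin (m + n)) :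
    (sylv m n p r).mulVec v i
      = (polyOf (fun j => if h : j < m + n then v ⟨j, h⟩ else 0) n * p
        + polyOf (fun j => if h : j + n < m + n then v ⟨j + n, h⟩ else 0) m * r).coeff i := by
  have vv : ∀ j : Fin (m + n), v j = if h : (j : ℕ) < m + n then v ⟨j, h⟩ else 0 := by
    intro j; rw [dif_pos j.isLt]
  rw [coeff_add, polyOf_mul_coeff, polyOf_mul_coeff]
  rw [Matrix.mulVec, dotProduct]
  rw [show (∑ j : Fin (m+n), sylv m n p r i j * v j)
      = ∑ t ∈ Finset.range (m + n), (fun t : ℕ =>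
        (if t < n then (if t ≤ (i:ℕ) then p.coeff ((i:ℕ) - t) else 0)
          else (if t - n ≤ (i:ℕ) then r.coeff ((i:ℕ) - (t - n)) else 0))
        * (if h : t < m + n then v ⟨t, h⟩ else 0)) t from ?_]
  · rw [sum_range_add']
    congr 1
    · refine Finset.sum_congr rfl fun t ht => ?_
      rw [if_pos (Finset.mem_range.mp ht)]
    · refine Finset.sum_congr rfl fun t ht => ?_
      rw [if_neg (by omega), show n + t - n = t from by omega, show t + n = n + t from by omega]
  · rw [← Fin.sum_univ_eq_sum_range]
    refine Finset.sum_congr rfl fun j _ => ?_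
    rw [← vv j]
    rfl

lemma sylv_det_ne_zero {p r : F[X]} {dy : ℕ} (h0 : 0 < dy) (hp : p.natDegree = dy)
    (hr : r.natDegree ≤ dy - 1) (hco : IsCoprime p r) :
    (sylv dy (dy - 1) p r).det ≠ 0 := by
  classical
  intro hdet
  obtain ⟨v, hv, hmv⟩ := (Matrix.exists_mulVec_eq_zero_iff).mpr hdet
  set a := polyOf (fun j => if h : j < dy + (dy - 1) then v ⟨j, h⟩ else 0) (dy - 1) with ha
  set b := polyOf (fun j => if h : j + (dy - 1) < dy + (dy - 1) then v ⟨j + (dy - 1), h⟩ else 0)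
    dy with hb
  have hpne : p ≠ 0 := fun h => by simp [h] at hp; omega
  have key : a * p + b * r = 0 := by
    ext t
    rw [coeff_zero]
    by_cases ht : t < dy + (dy - 1)
    · have h2 := sylv_mulVec dy (dy - 1) p r v ⟨t, ht⟩
      rw [hmv] at h2
      have h3 : (a * p + b * r).coeff t = (0 : Fin (dy + (dy - 1)) → F) ⟨t, ht⟩ := h2.symm
      simpa only [Pi.zero_apply] using h3
    · push_neg at ht
      apply coeff_eq_zero_of_degree_lt
      apply lt_of_le_of_lt (degree_add_le _ _)
      apply max_lt
      · exact lt_of_lt_of_le (polyOf_mul_degree_lt _ _ hp.le)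
          (by exact_mod_cast by omega : (((dy - 1) + dy : ℕ) : WithBot ℕ) ≤ (t : WithBot ℕ))
      · exact lt_of_lt_of_le (polyOf_mul_degree_lt _ _ hr)
          (by exact_mod_cast by omega : ((dy + (dy - 1) : ℕ) : WithBot ℕ) ≤ (t : WithBot ℕ))
  have hb0 : b = 0 := by
    by_contra hbne
    have hdvd : p ∣ b * r := ⟨-a, by linear_combination key⟩
    have := hco.dvd_of_dvd_mul_right hdvd
    have hblt : b.natDegree < p.natDegree := by
      rw [hp]
      exact (natDegree_lt_iff_degree_lt hbne).mpr (polyOf_degree_lt _ _)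
    exact hbne (eq_zero_of_dvd_of_natDegree_lt this hblt)
  have ha0 : a = 0 := by
    have : a * p = 0 := by rw [hb0] at key; simpa using key
    rcases mul_eq_zero.mp this with h | h
    · exact h
    · exact absurd h hpne
  apply hv
  funext j
  rcases lt_or_ge (j : ℕ) (dy - 1) with hj | hj
  · have := polyOf_coeff (fun t => if h : t < dy + (dy - 1) then v ⟨t, h⟩ else 0) (dy - 1) (j : ℕ)
    rw [← ha, ha0, coeff_zero, if_pos hj, dif_pos j.isLt] at this
    simpa using this.symm
  · have hj2 : (j : ℕ) - (dy - 1) < dy := by have := j.isLt; omega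
    have hlt : (j : ℕ) - (dy - 1) + (dy - 1) < dy + (dy - 1) := by have := j.isLt; omega
    have := polyOf_coeff
      (fun t => if h : t + (dy - 1) < dy + (dy - 1) then v ⟨t + (dy - 1), h⟩ else 0)
      dy ((j : ℕ) - (dy - 1))
    rw [← hb, hb0, coeff_zero, if_pos hj2, dif_pos hlt] at this
    have hfin : (⟨(j : ℕ) - (dy - 1) + (dy - 1), hlt⟩ : Fin (dy + (dy - 1))) = j := by
      apply Fin.ext
      simp only [Fin.val_mk]
      omega
    rw [hfin] at this
    simpa using this.symm

lemma isCoprime_of_sylv_det_ne_zero {p r : F[X]} {dy : ℕ} (h0 : 0 < dy)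
    (hp : p.natDegree ≤ dy) (hr : r.natDegree ≤ dy - 1)
    (hdet : (sylv dy (dy - 1) p r).det ≠ 0) : IsCoprime p r := by
  classical
  set M := sylv dy (dy - 1) p r with hM
  set e : Fin (dy + (dy - 1)) → F := Pi.single ⟨0, by omega⟩ 1 with he
  set v := M⁻¹.mulVec e with hvdef
  have hMv : M.mulVec v = e := by
    rw [hvdef, Matrix.mulVec_mulVec, Matrix.mul_nonsing_inv _ (isUnit_iff_ne_zero.mpr hdet),
      Matrix.one_mulVec]
  refine ⟨polyOf (fun j => if h : j < dy + (dy - 1) then v ⟨j, h⟩ else 0) (dy - 1),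
    polyOf (fun j => if h : j + (dy - 1) < dy + (dy - 1) then v ⟨j + (dy - 1), h⟩ else 0) dy, ?_⟩
  ext t
  by_cases ht : t < dy + (dy - 1)
  · have h2 := sylv_mulVec dy (dy - 1) p r v ⟨t, ht⟩
    rw [hMv] at h2
    have h3 : (polyOf (fun j => if h : j < dy + (dy - 1) then v ⟨j, h⟩ else 0) (dy - 1) * p
        + polyOf (fun j => if h : j + (dy - 1) < dy + (dy - 1) then v ⟨j + (dy - 1), h⟩ else 0)
          dy * r).coeff t = e ⟨t, ht⟩ := h2.symm
    rw [h3, he, coeff_one]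
    simp [Pi.single_apply, Fin.ext_iff]
  · push_neg at ht
    rw [coeff_one, if_neg (by omega)]
    apply coeff_eq_zero_of_degree_lt
    apply lt_of_le_of_lt (degree_add_le _ _)
    apply max_lt
    · exact lt_of_lt_of_le (polyOf_mul_degree_lt _ _ hp)
        (by exact_mod_cast by omega : (((dy - 1) + dy : ℕ) : WithBot ℕ) ≤ (t : WithBot ℕ))
    · exact lt_of_lt_of_le (polyOf_mul_degree_lt _ _ hr)
        (by exact_mod_cast by omega : ((dy + (dy - 1) : ℕ) : WithBot ℕ) ≤ (t : WithBot ℕ))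

lemma sylv_det_eq_zero {p : F[X]} {dy : ℕ} (h0 : 0 < dy) (hp : p.natDegree < dy) :
    (sylv dy (dy - 1) p (derivative p)).det = 0 := by
  apply Matrix.det_eq_zero_of_row_eq_zero ⟨dy + (dy - 1) - 1, by omega⟩
  intro j
  have hj := j.isLt
  simp only [sylv, Matrix.of_apply]
  split_ifs with h1 h2 h2
  · exact coeff_eq_zero_of_natDegree_lt (by omega)
  · rfl
  · rw [coeff_derivative, coeff_eq_zero_of_natDegree_lt (by omega), zero_mul]
  · rfl

lemma sylv_det_ne_zero_iff [CharZero F] (p : F[X]) (dy : ℕ) (h0 : 0 < dy)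
    (hp : p.natDegree ≤ dy) :
    (sylv dy (dy - 1) p (derivative p)).det ≠ 0 ↔ p.natDegree = dy ∧ Squarefree p := by
  constructor
  · intro h
    have hdeg : p.natDegree = dy := by
      by_contra hne
      exact h (sylv_det_eq_zero h0 (lt_of_le_of_ne hp hne))
    refine ⟨hdeg, ?_⟩
    rw [← PerfectField.separable_iff_squarefree]
    exact isCoprime_of_sylv_det_ne_zero h0 hp ((natDegree_derivative_le p).trans (by omega)) h
  · rintro ⟨hdeg, hsq⟩
    exact sylv_det_ne_zero h0 hdeg
      ((natDegree_derivative_le p).trans (by omega))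
      (PerfectField.separable_iff_squarefree.mpr hsq)

end Field

lemma det_natDegree_le {R : Type*} [CommRing R] {s : ℕ}
    (M : Matrix (Fin s) (Fin s) (Polynomial R)) (d : ℕ)
    (h : ∀ i j, (M i j).natDegree ≤ d) : M.det.natDegree ≤ s * d := by
  rw [Matrix.det_apply']
  apply natDegree_sum_le_of_forall_le
  intro σ _
  rw [← C_eq_intCast]
  apply (natDegree_C_mul_le _ _).trans
  apply (natDegree_prod_le _ _).trans
  calc ∑ i : Fin s, (M (σ i) i).natDegree ≤ ∑ _i : Fin s, d :=
        Finset.sum_le_sum fun i _ => h _ _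
    _ = s * d := by simp [mul_comm]

lemma det_coeff_top {R : Type*} [CommRing R] {s : ℕ}
    (M : Matrix (Fin s) (Fin s) (Polynomial R)) (d : ℕ)
    (h : ∀ i j, (M i j).natDegree ≤ d) :
    M.det.coeff (s * d) = (M.map fun f => f.coeff d).det := by
  rw [Matrix.det_apply', Matrix.det_apply', finset_sum_coeff]
  refine Finset.sum_congr rfl fun σ _ => ?_
  rw [← C_eq_intCast, coeff_C_mul]
  congr 1
  have := coeff_prod_of_natDegree_le (Finset.univ) (fun i : Fin s => M (σ i) i) d
    (fun i _ => h _ _)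
  simp only [Finset.card_univ, Fintype.card_fin] at this
  rw [this]
  simp [Matrix.map_apply]

/-- The coefficient of `x^dx` in a bivariate polynomial `q ∈ k[x][y]`
(written with `y` as the outer variable), as a polynomial in `y`. -/
noncomputable def xTopCoeff {k : Type*} [Field k] (q : Polynomial (Polynomial k)) (dx : ℕ) :
    Polynomial k :=
  q.sum fun i c => Polynomial.C (c.coeff dx) * Polynomial.X ^ i

/-- For `q ∈ k[x,y]` square-free with respect to `y`, of degree `dx` in `x` and `dy` in `y`,
the resultant `res_y(q, ∂_y q)` has the maximal possible degree `(2 dy - 1) dx` in `x`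
if and only if the coefficient of `x^dx` in `q` has degree exactly `dy` in `y`
and is square-free. -/
theorem resultant_maximal_degree_iff (k : Type*) [Field k] [CharZero k]
    (q : Polynomial (Polynomial k)) (hq0 : q ≠ 0)
    (dx dy : ℕ) (hdy : q.natDegree = dy) (hdy0 : 0 < dy)
    (hdx : dx = q.support.sup fun i => (q.coeff i).natDegree)
    (hsf : IsCoprime (q.map (algebraMap (Polynomial k) (RatFunc k)))
      ((derivative q).map (algebraMap (Polynomial k) (RatFunc k)))) :
    ((sylv dy (dy - 1) q (derivative q)).det).natDegree = (2 * dy - 1) * dx ↔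
      (xTopCoeff q dx).natDegree = dy ∧ Squarefree (xTopCoeff q dx) := by
  classical
  have hs : 2 * dy - 1 = dy + (dy - 1) := by omega
  set p := xTopCoeff q dx with hp
  have hpc : ∀ t, p.coeff t = (q.coeff t).coeff dx := by
    intro t
    rw [hp, xTopCoeff, Polynomial.sum_def, finset_sum_coeff]
    simp only [coeff_C_mul, coeff_X_pow, mul_ite, mul_one, mul_zero]
    rw [Finset.sum_ite_eq q.support t fun i => (q.coeff i).coeff dx]
    split_ifs with h
    · rfl
    · rw [notMem_support_iff.mp h, coeff_zero]
  have hder : ∀ t, (derivative p).coeff t = ((derivative q).coeff t).coeff dx := by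
    intro t
    rw [coeff_derivative, coeff_derivative, hpc]
    have hC : ((t : Polynomial k) + 1) = C ((t : k) + 1) := by
      simp [map_add, map_natCast]
    rw [hC, coeff_mul_C]
  have hqc : ∀ t, (q.coeff t).natDegree ≤ dx := by
    intro t
    by_cases h : q.coeff t = 0
    · simp [h]
    · rw [hdx]
      exact Finset.le_sup (f := fun i => (q.coeff i).natDegree) (mem_support_iff.mpr h)
  have hdc : ∀ t, ((derivative q).coeff t).natDegree ≤ dx := by
    intro t
    rw [coeff_derivative]
    refine natDegree_mul_le.trans ?_
    have h1 : ((t : Polynomial k) + 1).natDegree = 0 := by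
      apply Nat.le_zero.mp
      exact (natDegree_add_le _ _).trans (by simp [natDegree_natCast])
    rw [h1, Nat.add_zero]
    exact hqc _
  have hple : p.natDegree ≤ dy := by
    apply natDegree_le_iff_coeff_eq_zero.mpr
    intro t ht
    rw [hpc, coeff_eq_zero_of_natDegree_lt (by omega : q.natDegree < t), coeff_zero]
  set M := sylv dy (dy - 1) q (derivative q) with hM
  have hMdeg : ∀ i j, (M i j).natDegree ≤ dx := by
    intro i j
    rw [hM]
    simp only [sylv, Matrix.of_apply]
    split_ifs
    · exact hqc _
    · simp
    · exact hdc _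
    · simp
  have hmapk : (M.map fun f => f.coeff dx) = sylv dy (dy - 1) p (derivative p) := by
    ext i j
    rw [Matrix.map_apply, hM]
    simp only [sylv, Matrix.of_apply]
    split_ifs
    · exact (hpc _).symm
    · exact coeff_zero dx
    · exact (hder _).symm
    · exact coeff_zero dx
  set φ := algebraMap (Polynomial k) (RatFunc k) with hφ
  have hinj : Function.Injective φ := IsFractionRing.injective _ _
  have hmapφ : M.map φ = sylv dy (dy - 1) (q.map φ) (derivative (q.map φ)) := by
    ext i j
    rw [Matrix.map_apply, hM]
    simp only [sylv, Matrix.of_apply]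
    split_ifs
    · exact (coeff_map _ _).symm
    · exact map_zero φ
    · rw [derivative_map]; exact (coeff_map _ _).symm
    · exact map_zero φ
  have hQdeg : (q.map φ).natDegree = dy := by
    rw [natDegree_map_eq_of_injective hinj, hdy]
  have hdet_ne : M.det ≠ 0 := by
    intro h
    have h2 : (sylv dy (dy - 1) (q.map φ) (derivative (q.map φ))).det = 0 := by
      rw [← hmapφ, show M.map ⇑φ = φ.mapMatrix M from (RingHom.mapMatrix_apply _ _).symm,
        ← RingHom.map_det, h, map_zero]
    exact sylv_det_ne_zero hdy0 hQdeg
      ((natDegree_derivative_le _).trans (le_of_eq (by rw [hQdeg])))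
      (by rw [derivative_map]; exact hsf) h2
  rw [hs]
  have hle : M.det.natDegree ≤ (dy + (dy - 1)) * dx := det_natDegree_le M dx hMdeg
  have hcoeff : M.det.coeff ((dy + (dy - 1)) * dx) = (sylv dy (dy - 1) p (derivative p)).det := by
    rw [det_coeff_top M dx hMdeg, hmapk]
  constructor
  · intro h
    apply (sylv_det_ne_zero_iff p dy hdy0 hple).mp
    rw [← hcoeff, ← h, coeff_natDegree]
    exact leadingCoeff_ne_zero.mpr hdet_ne
  · intro h
    have h2 := (sylv_det_ne_zero_iff p dy hdy0 hple).mpr h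
    rw [← hcoeff] at h2
    exact le_antisymm hle (le_natDegree_of_ne_zero h2)
end

section
/- Let q ∈ k(x)[y] with deg_y q = d_y, q_y = ∂_y q, and let M₂ : k(x)[y]_{<d_y} → k(x)[y]_{<2d_y} be multiplication by q, M₁ : A ↦ q ∂_y(A) − q_y A from k(x)[y]_{<d_y} to k(x)[y]_{<2d_y}. Then det[M₁ M₂] = ± det[−M₃ M₂] where M₃ is multiplication by q_y, and this determinant equals ± lc(q)·res_y(q, q_y), where lc(q) is the leading coefficient of q in y. -/
open Polynomial

/-- Matrix of the multiplication map `K[y]_{<d} → K[y]_{<2d}`, `A ↦ p·A`,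
in the monomial bases. -/
def mulMat {K : Type*} [Field K] (d : ℕ) (p : Polynomial K) :
    Matrix (Fin (2 * d)) (Fin d) K :=
  Matrix.of fun i j => if (j : ℕ) ≤ (i : ℕ) then p.coeff ((i : ℕ) - (j : ℕ)) else 0

/-- Matrix of the map `K[y]_{<d} → K[y]_{<2d}`, `A ↦ q·∂_y A − (∂_y q)·A`. -/
noncomputable def hermMat {K : Type*} [Field K] (d : ℕ) (q : Polynomial K) :
    Matrix (Fin (2 * d)) (Fin d) K :=
  Matrix.of fun i j =>
    (if 1 ≤ (j : ℕ) ∧ (j : ℕ) - 1 ≤ (i : ℕ) then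
        ((j : ℕ) : K) * q.coeff ((i : ℕ) - ((j : ℕ) - 1)) else 0) -
    (if (j : ℕ) ≤ (i : ℕ) then (derivative q).coeff ((i : ℕ) - (j : ℕ)) else 0)

/-- Horizontal concatenation of two `2d × d` matrices into a square `2d × 2d` matrix. -/
def combine {K : Type*} [Field K] (d : ℕ) (A B : Matrix (Fin (2 * d)) (Fin d) K) :
    Matrix (Fin (2 * d)) (Fin (2 * d)) K :=
  Matrix.of fun i j =>
    if h : (j : ℕ) < d then A i ⟨j, h⟩
    else B i ⟨(j : ℕ) - d, by have := j.isLt; omega⟩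

/- ### Auxiliary machinery -/

/-- Elementary column-operation matrix. -/
def elimE (K : Type*) [Field K] (d : ℕ) : Matrix (Fin (2 * d)) (Fin (2 * d)) K :=
  Matrix.of fun k j =>
    (if k = j then 1 else 0) +
    (if 1 ≤ (j : ℕ) ∧ (j : ℕ) < d ∧ (k : ℕ) = d + (j : ℕ) - 1 then ((j : ℕ) : K) else 0)

lemma det_elimE (K : Type*) [Field K] (d : ℕ) : (elimE K d).det = 1 := by
  rw [Matrix.det_of_lowerTriangular (elimE K d) ?ht]
  · apply Finset.prod_eq_one
    intro j _
    simp only [elimE, Matrix.of_apply]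
    rw [if_neg (show ¬(1 ≤ (j:ℕ) ∧ (j:ℕ) < d ∧ (j:ℕ) = d + (j:ℕ) - 1) by omega), add_zero]
    simp
  · intro i j hij
    have hij' : (i : Fin (2 * d)) < j := hij
    have hlt : (i : ℕ) < (j : ℕ) := hij'
    simp only [elimE, Matrix.of_apply]
    rw [if_neg (show i ≠ j from fun h => by rw [h] at hlt; omega),
      if_neg (by omega), add_zero]

/-- The block-swap permutation function on `Fin (2d)`. -/
def permFun (d : ℕ) : Fin (2 * d) → Fin (2 * d) := fun j =>
  if h : (j : ℕ) < d - 1 then ⟨(j : ℕ) + d, by omega⟩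
  else if h2 : (j : ℕ) < 2 * d - 1 then ⟨(j : ℕ) - (d - 1), by omega⟩ else j

lemma permFun_injective (d : ℕ) : Function.Injective (permFun d) := by
  intro a b hab
  have ha := a.isLt
  have hb := b.isLt
  have h := congrArg Fin.val hab
  simp only [permFun] at h
  split_ifs at h <;> simp only [Fin.ext_iff] at * <;> omega

/-- Reindexing `Fin (2d)` as `Fin (d + (d-1)) ⊕ Fin 1`. -/
def blockEquiv (d : ℕ) (hd0 : 0 < d) : Fin (2 * d) ≃ (Fin (d + (d - 1)) ⊕ Fin 1) :=
  (finCongr (by omega)).trans finSumFinEquiv.symm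

lemma blockEquiv_symm_inl (d : ℕ) (hd0 : 0 < d) (i : Fin (d + (d - 1))) :
    (((blockEquiv d hd0).symm (Sum.inl i)) : ℕ) = (i : ℕ) := by
  simp [blockEquiv]

lemma blockEquiv_symm_inr (d : ℕ) (hd0 : 0 < d) (i : Fin 1) :
    (((blockEquiv d hd0).symm (Sum.inr i)) : ℕ) = 2 * d - 1 := by
  have : i = 0 := Subsingleton.elim _ _
  subst this
  simp [blockEquiv]
  omega

/-- `det [M₁ M₂] = ± det [−M₃ M₂]`, and this determinant equals
`± lc(q) · res_y(q, ∂_y q)`, where `M₂`, `M₃` are multiplication by `q`, `∂_y q`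
and `M₁ : A ↦ q ∂_y A − (∂_y q) A` on `K[y]_{<d}`. -/
theorem det_hermite_system_eq_lc_mul_resultant (K : Type*) [Field K] [CharZero K]
    (q : Polynomial K) (d : ℕ) (hd : q.natDegree = d) (hd0 : 0 < d) :
    ∃ ε ε' : K, (ε = 1 ∨ ε = -1) ∧ (ε' = 1 ∨ ε' = -1) ∧
      (combine d (hermMat d q) (mulMat d q)).det =
        ε' * (combine d (-(mulMat d (derivative q))) (mulMat d q)).det ∧
      (combine d (hermMat d q) (mulMat d q)).det =
        ε * (q.leadingCoeff * (sylv d (d - 1) q (derivative q)).det) := by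
  set q' := derivative q with hq'def
  have hqc : ∀ k, d < k → q.coeff k = 0 := fun k hk =>
    coeff_eq_zero_of_natDegree_lt (by omega)
  have hq'c : ∀ k, d - 1 < k → q'.coeff k = 0 := by
    intro k hk
    rw [hq'def, coeff_derivative, hqc (k + 1) (by omega), zero_mul]
  set C := combine d (-(mulMat d q')) (mulMat d q) with hCdef
  set C₂ := combine d (mulMat d q') (mulMat d q) with hC₂def
  set H := combine d (hermMat d q) (mulMat d q) with hHdef
  -- Step 1 : H = C * elimE
  have hmulE : ∀ (M : Matrix (Fin (2*d)) (Fin (2*d)) K) (i j : Fin (2*d)),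
      (M * elimE K d) i j = M i j +
        (if h : 1 ≤ (j:ℕ) ∧ (j:ℕ) < d then
          ((j:ℕ) : K) * M i ⟨d + (j:ℕ) - 1, by omega⟩ else 0) := by
    intro M i j
    rw [Matrix.mul_apply]
    simp only [elimE, Matrix.of_apply, mul_add]
    rw [Finset.sum_add_distrib]
    congr 1
    · simp [mul_ite]
    · by_cases hj : 1 ≤ (j:ℕ) ∧ (j:ℕ) < d
      · rw [dif_pos hj]
        rw [Finset.sum_eq_single (⟨d + (j:ℕ) - 1, by omega⟩ : Fin (2*d))]
        · rw [if_pos ⟨hj.1, hj.2, rfl⟩, mul_comm]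
        · intro k _ hk
          rw [if_neg, mul_zero]
          rintro ⟨-, -, hkv⟩
          exact hk (Fin.ext hkv)
        · intro hmem
          exact absurd (Finset.mem_univ _) hmem
      · rw [dif_neg hj]
        apply Finset.sum_eq_zero
        intro k _
        rw [if_neg (fun h => hj ⟨h.1, h.2.1⟩), mul_zero]
  have hstep1 : H = C * elimE K d := by
    ext i j
    rw [hmulE]
    by_cases hj : (j : ℕ) < d
    · simp only [hHdef, hCdef, combine, Matrix.of_apply, dif_pos hj, hermMat,
        Matrix.neg_apply, mulMat]
      by_cases hj1 : 1 ≤ (j : ℕ)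
      · rw [dif_pos ⟨hj1, hj⟩, dif_neg (show ¬ (d + (j:ℕ) - 1 < d) by omega)]
        have hv : d + (j:ℕ) - 1 - d = (j:ℕ) - 1 := by omega
        rw [hv]
        by_cases hji : (j:ℕ) - 1 ≤ (i:ℕ)
        · rw [if_pos ⟨hj1, hji⟩, if_pos hji]
          ring
        · rw [if_neg (fun h => hji h.2), if_neg hji]
          ring
      · rw [dif_neg (fun h => hj1 h.1), if_neg (fun h => hj1 h.1)]
        ring
    · simp only [hHdef, hCdef, combine, Matrix.of_apply]
      rw [dif_neg hj, dif_neg hj, dif_neg (show ¬ (1 ≤ (j:ℕ) ∧ (j:ℕ) < d) from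
        fun h => hj h.2), add_zero]
  have hdetHC : H.det = C.det := by
    rw [hstep1, Matrix.det_mul, det_elimE, mul_one]
  -- Step 2 : C = C₂ * Δ
  set Δ := Matrix.diagonal (fun j : Fin (2*d) => if (j:ℕ) < d then (-1 : K) else 1)
    with hΔdef
  have hstep2 : C = C₂ * Δ := by
    ext i j
    rw [Matrix.mul_diagonal]
    by_cases hj : (j : ℕ) < d
    · simp only [hCdef, hC₂def, combine, Matrix.of_apply, dif_pos hj,
        Matrix.neg_apply, if_pos hj]
      ring
    · simp only [hCdef, hC₂def, combine, Matrix.of_apply, dif_neg hj, if_neg hj]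
      ring
  have hΔ2 : Δ.det * Δ.det = 1 := by
    rw [Matrix.det_diagonal, ← Finset.prod_mul_distrib]
    apply Finset.prod_eq_one
    intro j _
    split_ifs <;> norm_num
  -- Step 3 : the permutation
  set σ : Equiv.Perm (Fin (2*d)) :=
    Equiv.ofBijective (permFun d) (Finite.injective_iff_bijective.mp (permFun_injective d))
    with hσdef
  have hσapp : ∀ j, σ j = permFun d j := fun j => rfl
  -- entry formula for the permuted matrix
  have key : ∀ (i j : Fin (2*d)), (C₂.submatrix id σ) i j =
      (if (j:ℕ) < d - 1 then (if (j:ℕ) ≤ (i:ℕ) then q.coeff ((i:ℕ) - (j:ℕ)) else 0)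
       else if (j:ℕ) < 2*d - 1 then
         (if (j:ℕ) - (d-1) ≤ (i:ℕ) then q'.coeff ((i:ℕ) - ((j:ℕ) - (d-1))) else 0)
       else (if d - 1 ≤ (i:ℕ) then q.coeff ((i:ℕ) - (d - 1)) else 0)) := by
    intro i j
    rw [Matrix.submatrix_apply, id_eq, hσapp]
    have hjlt := j.isLt
    unfold permFun
    by_cases h1 : (j:ℕ) < d - 1
    · rw [dif_pos h1, if_pos h1]
      simp only [hC₂def, combine, Matrix.of_apply]
      rw [dif_neg (show ¬ ((j:ℕ) + d < d) by omega)]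
      simp only [mulMat, Matrix.of_apply, Nat.add_sub_cancel]
    · rw [dif_neg h1, if_neg h1]
      by_cases h2 : (j:ℕ) < 2*d - 1
      · rw [dif_pos h2, if_pos h2]
        simp only [hC₂def, combine, Matrix.of_apply]
        rw [dif_pos (show (j:ℕ) - (d-1) < d by omega)]
        simp only [mulMat, Matrix.of_apply]
      · rw [dif_neg h2, if_neg h2]
        have hjv : (j:ℕ) = 2*d - 1 := by omega
        simp only [hC₂def, combine, Matrix.of_apply]
        rw [dif_neg (show ¬ ((j:ℕ) < d) by omega)]
        simp only [mulMat, Matrix.of_apply]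
        rw [show (j:ℕ) - d = d - 1 by omega]
  -- Step 4 : block decomposition
  set e := blockEquiv d hd0 with hedef
  set S := sylv d (d - 1) q q' with hSdef
  set B : Matrix (Fin (d + (d-1))) (Fin 1) K :=
    Matrix.of fun i _ => (C₂.submatrix id σ) (e.symm (Sum.inl i)) (e.symm (Sum.inr 0))
    with hBdef
  have hblocks : Matrix.reindex e e (C₂.submatrix id σ) =
      Matrix.fromBlocks S B 0 (Matrix.of fun _ _ => q.leadingCoeff) := by
    ext i j
    rw [Matrix.reindex_apply, Matrix.submatrix_apply]
    cases i with
    | inl i =>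
      cases j with
      | inl j =>
        rw [key]
        have hvi := blockEquiv_symm_inl d hd0 i
        have hvj := blockEquiv_symm_inl d hd0 j
        rw [hvi, hvj]
        have hjlt := j.isLt
        simp only [Matrix.fromBlocks_apply₁₁, hSdef, sylv, Matrix.of_apply]
        by_cases h1 : (j:ℕ) < d - 1
        · rw [if_pos h1, if_pos h1]
        · rw [if_neg h1, if_neg h1, if_pos (show (j:ℕ) < 2*d - 1 by omega)]
      | inr j =>
        have hj0 : j = 0 := Subsingleton.elim _ _
        subst hj0
        rfl
    | inr i =>
      have hi0 : i = 0 := Subsingleton.elim _ _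
      subst hi0
      have hvi := blockEquiv_symm_inr d hd0 0
      cases j with
      | inl j =>
        rw [key, hvi]
        have hvj := blockEquiv_symm_inl d hd0 j
        rw [hvj]
        have hjlt := j.isLt
        simp only [Matrix.fromBlocks_apply₂₁, Matrix.zero_apply]
        by_cases h1 : (j:ℕ) < d - 1
        · rw [if_pos h1, if_pos (by omega), hqc (2*d - 1 - (j:ℕ)) (by omega)]
        · rw [if_neg h1, if_pos (by omega), if_pos (by omega),
            hq'c (2*d - 1 - ((j:ℕ) - (d-1))) (by omega)]
      | inr j =>
        have hj0 : j = 0 := Subsingleton.elim _ _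
        subst hj0
        rw [key, hvi]
        simp only [Matrix.fromBlocks_apply₂₂, Matrix.of_apply]
        rw [if_neg (show ¬(2*d - 1 < d - 1) by omega),
          if_neg (show ¬(2*d - 1 < 2*d - 1) by omega),
          if_pos (show d - 1 ≤ 2*d - 1 by omega)]
        rw [show 2*d - 1 - (d - 1) = d by omega]
        rw [← hd, Polynomial.leadingCoeff]
  have hdetC₃ : (C₂.submatrix id σ).det = S.det * q.leadingCoeff := by
    rw [← Matrix.det_reindex_self e (C₂.submatrix id σ), hblocks,
      Matrix.det_fromBlocks_zero₂₁, Matrix.det_fin_one]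
    rfl
  have hperm := Matrix.det_permute' σ C₂
  -- conclude
  rcases Int.units_eq_one_or (Equiv.Perm.sign σ) with hs | hs
  · rw [hs] at hperm
    simp only [Units.val_one, Int.cast_one, one_mul] at hperm
    refine ⟨Δ.det, 1, ?_, Or.inl rfl, by rw [hdetHC, one_mul], ?_⟩
    · exact mul_self_eq_one_iff.mp hΔ2
    · rw [hdetHC, hstep2, Matrix.det_mul, ← hperm, hdetC₃]
      ring
  · rw [hs] at hperm
    simp only [Units.val_neg, Units.val_one, Int.cast_neg, Int.cast_one, neg_mul,
      one_mul, neg_one_mul] at hperm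
    refine ⟨-Δ.det, 1, ?_, Or.inl rfl, by rw [hdetHC, one_mul], ?_⟩
    · rcases mul_self_eq_one_iff.mp hΔ2 with h | h
      · right; rw [h]
      · left; rw [h]; ring
    · have : C₂.det = -(S.det * q.leadingCoeff) := by
        rw [← hdetC₃, hperm]; ring
      rw [hdetHC, hstep2, Matrix.det_mul, this]
      ring
end

section
/- Let T = B L^{-1} C be a strictly proper state-space realisation with L = xI_m − A and A ∈ k^{m×m}, B ∈ k^{n×m}, C ∈ k^{m×n}, and θ = ∂_x + T. Define Λ_i^j = Π_{ℓ=i}^{j−1} [(CB − ℓI_m)L^{-1}] (ordered product, Λ_j^j = I_m). Then for 1 ≤ i ≤ j: Λ_i^{j+1} − (Λ_i^j)' = (CB − iI_m) L^{-1} Λ_i^j. -/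
set_option synthInstance.maxHeartbeats 1000000
set_option maxHeartbeats 1000000

open Polynomial

/-- The ordered product `Λ_i^j = ∏_{ℓ=i}^{j-1} [(CB - ℓ I_m) L⁻¹]`, with `Λ_j^j = I_m`. -/
noncomputable def Lam {k : Type*} [Field k] {m : ℕ}
    (CB L : Matrix (Fin m) (Fin m) (RatFunc k)) (i j : ℕ) :
    Matrix (Fin m) (Fin m) (RatFunc k) :=
  ((List.range (j - i)).map fun t =>
    (CB - (((i + t : ℕ) : RatFunc k) • (1 : Matrix (Fin m) (Fin m) (RatFunc k)))) * L⁻¹).prod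

section RatDerivLemmas

variable {k : Type*} [Field k]

lemma ratDeriv_algebraMap (p : Polynomial k) :
    ratDeriv (algebraMap (Polynomial k) (RatFunc k) p)
      = algebraMap (Polynomial k) (RatFunc k) (derivative p) := by
  simp [ratDeriv, RatFunc.num_algebraMap, RatFunc.denom_algebraMap]

lemma ratDeriv_div (p q : Polynomial k) (hq : q ≠ 0) :
    ratDeriv (algebraMap (Polynomial k) (RatFunc k) p / algebraMap (Polynomial k) (RatFunc k) q) =
      algebraMap (Polynomial k) (RatFunc k) (derivative p * q - p * derivative q) /
        (algebraMap (Polynomial k) (RatFunc k) q) ^ 2 := by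
  have hd : (algebraMap (Polynomial k) (RatFunc k) p / algebraMap (Polynomial k) (RatFunc k) q).denom ≠ 0 :=
    RatFunc.denom_ne_zero _
  have hqa : (algebraMap (Polynomial k) (RatFunc k) q) ≠ 0 := by simpa using hq
  have hda : (algebraMap (Polynomial k) (RatFunc k)
      (algebraMap (Polynomial k) (RatFunc k) p / algebraMap (Polynomial k) (RatFunc k) q).denom) ≠ 0 := by
    simpa using hd
  set f : RatFunc k := algebraMap (Polynomial k) (RatFunc k) p / algebraMap (Polynomial k) (RatFunc k) q
  have key : f.num * q = p * f.denom := by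
    apply RatFunc.algebraMap_injective k
    rw [map_mul, map_mul]
    exact (div_eq_div_iff hda hqa).mp (by rw [f.num_div_denom])
  have key' : derivative f.num * q + f.num * derivative q
      = derivative p * f.denom + p * derivative f.denom := by
    have := congrArg derivative key
    simpa [derivative_mul] using this
  rw [ratDeriv, div_eq_div_iff (pow_ne_zero 2 hda) (pow_ne_zero 2 hqa)]
  rw [← map_pow, ← map_pow, ← map_mul, ← map_mul]
  congr 1
  linear_combination (f.denom * q) * key' - (derivative f.denom * q + derivative q * f.denom) * key

lemma ratDeriv_add (a b : RatFunc k) : ratDeriv (a + b) = ratDeriv a + ratDeriv b := by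
  obtain ⟨n1, d1, hd1, rfl⟩ : ∃ nn d, d ≠ 0 ∧ a = algebraMap (Polynomial k) (RatFunc k) nn / algebraMap _ _ d :=
    ⟨a.num, a.denom, a.denom_ne_zero, a.num_div_denom.symm⟩
  obtain ⟨n2, d2, hd2, rfl⟩ : ∃ nn d, d ≠ 0 ∧ b = algebraMap (Polynomial k) (RatFunc k) nn / algebraMap _ _ d :=
    ⟨b.num, b.denom, b.denom_ne_zero, b.num_div_denom.symm⟩
  have hd1a : (algebraMap (Polynomial k) (RatFunc k) d1) ≠ 0 := by simpa using hd1
  have hd2a : (algebraMap (Polynomial k) (RatFunc k) d2) ≠ 0 := by simpa using hd2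
  rw [div_add_div _ _ hd1a hd2a, ← map_mul, ← map_mul, ← map_mul, ← map_add,
    ratDeriv_div _ _ (mul_ne_zero hd1 hd2), ratDeriv_div _ _ hd1, ratDeriv_div _ _ hd2]
  simp only [derivative_add, derivative_mul, map_add, map_mul, map_sub]
  field_simp
  ring

lemma ratDeriv_mul (a b : RatFunc k) : ratDeriv (a * b) = ratDeriv a * b + a * ratDeriv b := by
  obtain ⟨n1, d1, hd1, rfl⟩ : ∃ nn d, d ≠ 0 ∧ a = algebraMap (Polynomial k) (RatFunc k) nn / algebraMap _ _ d :=
    ⟨a.num, a.denom, a.denom_ne_zero, a.num_div_denom.symm⟩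
  obtain ⟨n2, d2, hd2, rfl⟩ : ∃ nn d, d ≠ 0 ∧ b = algebraMap (Polynomial k) (RatFunc k) nn / algebraMap _ _ d :=
    ⟨b.num, b.denom, b.denom_ne_zero, b.num_div_denom.symm⟩
  have hd1a : (algebraMap (Polynomial k) (RatFunc k) d1) ≠ 0 := by simpa using hd1
  have hd2a : (algebraMap (Polynomial k) (RatFunc k) d2) ≠ 0 := by simpa using hd2
  rw [div_mul_div_comm, ← map_mul, ← map_mul,
    ratDeriv_div _ _ (mul_ne_zero hd1 hd2), ratDeriv_div _ _ hd1, ratDeriv_div _ _ hd2]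
  simp only [derivative_mul, map_add, map_mul, map_sub]
  field_simp
  ring

lemma ratDeriv_zero : ratDeriv (0 : RatFunc k) = 0 := by
  simp [ratDeriv]

lemma ratDeriv_one : ratDeriv (1 : RatFunc k) = 0 := by
  simp [ratDeriv]

/-- `ratDeriv` bundled as an additive monoid hom. -/
noncomputable def ratDerivHom : RatFunc k →+ RatFunc k :=
  { toFun := ratDeriv, map_zero' := ratDeriv_zero, map_add' := ratDeriv_add }

lemma ratDeriv_sub (a b : RatFunc k) : ratDeriv (a - b) = ratDeriv a - ratDeriv b :=
  map_sub ratDerivHom a b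

lemma ratDeriv_neg (a : RatFunc k) : ratDeriv (-a) = -ratDeriv a :=
  map_neg ratDerivHom a

lemma ratDeriv_C (c : k) : ratDeriv (RatFunc.C c) = 0 := by
  rw [← RatFunc.algebraMap_C, ratDeriv_algebraMap, derivative_C, map_zero]

lemma ratDeriv_X : ratDeriv (RatFunc.X : RatFunc k) = 1 := by
  rw [← RatFunc.algebraMap_X, ratDeriv_algebraMap, derivative_X, map_one]

lemma ratDeriv_natCast (n : ℕ) : ratDeriv ((n : RatFunc k)) = 0 := by
  rw [← map_natCast (algebraMap (Polynomial k) (RatFunc k)) n, ratDeriv_algebraMap]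
  simp

lemma ratDeriv_sum {ι : Type*} (s : Finset ι) (f : ι → RatFunc k) :
    ratDeriv (∑ x ∈ s, f x) = ∑ x ∈ s, ratDeriv (f x) :=
  map_sum ratDerivHom f s

end RatDerivLemmas

section MatrixLemmas

variable {k : Type*} [Field k] {m : ℕ}

lemma map_ratDeriv_one : (1 : Matrix (Fin m) (Fin m) (RatFunc k)).map ratDeriv = 0 := by
  ext a b
  simp [Matrix.map_apply, Matrix.one_apply, apply_ite ratDeriv, ratDeriv_one, ratDeriv_zero]

lemma map_ratDeriv_mul (M N : Matrix (Fin m) (Fin m) (RatFunc k)) :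
    (M * N).map ratDeriv = M.map ratDeriv * N + M * N.map ratDeriv := by
  ext a b
  simp only [Matrix.map_apply, Matrix.mul_apply, Matrix.add_apply]
  rw [ratDeriv_sum]
  simp only [ratDeriv_mul]
  rw [Finset.sum_add_distrib]

lemma Lam_self (CB L : Matrix (Fin m) (Fin m) (RatFunc k)) (i : ℕ) : Lam CB L i i = 1 := by
  simp [Lam]

lemma Lam_succ (CB L : Matrix (Fin m) (Fin m) (RatFunc k)) {i j : ℕ} (h : i ≤ j) :
    Lam CB L i (j + 1) = Lam CB L i j *
      ((CB - (((j : ℕ) : RatFunc k) • (1 : Matrix (Fin m) (Fin m) (RatFunc k)))) * L⁻¹) := by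
  unfold Lam
  rw [show j + 1 - i = (j - i) + 1 from by omega, List.range_succ, List.map_append,
    List.prod_append, List.map_cons, List.map_nil, List.prod_cons, List.prod_nil, mul_one]
  congr 3
  rw [Nat.add_sub_cancel' h]

lemma key_ring {R : Type*} [Ring R] (S E P D Q : R) (h : P * (S * E) - D = Q * P) :
    P * (S * E) * ((S - 1) * E) - (D * (S * E) + P * (S * -(E * E))) = Q * (P * (S * E)) := by
  rw [← mul_assoc Q P, ← h]
  noncomm_ring

end MatrixLemmas

/-- For a strictly proper state-space realisation `T = B L⁻¹ C` with `L = x I_m - A`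
and scalar matrices `A, B, C`, one has, for `1 ≤ i ≤ j`:
`Λ_i^{j+1} - (Λ_i^j)' = (CB - i I_m) L⁻¹ Λ_i^j`. -/
theorem Lam_succ_sub_deriv (k : Type*) [Field k] [CharZero k] (m n : ℕ)
    (A : Matrix (Fin m) (Fin m) k) (B : Matrix (Fin n) (Fin m) k) (C : Matrix (Fin m) (Fin n) k)
    (L : Matrix (Fin m) (Fin m) (RatFunc k))
    (hL : L = (RatFunc.X : RatFunc k) • (1 : Matrix (Fin m) (Fin m) (RatFunc k)) - A.map RatFunc.C)
    (hLu : IsUnit L.det)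
    (CB : Matrix (Fin m) (Fin m) (RatFunc k)) (hCB : CB = C.map RatFunc.C * B.map RatFunc.C)
    (i j : ℕ) (hi : 1 ≤ i) (hij : i ≤ j) :
    Lam CB L i (j + 1) - (Lam CB L i j).map ratDeriv =
      (CB - ((i : RatFunc k) • (1 : Matrix (Fin m) (Fin m) (RatFunc k)))) * L⁻¹ * Lam CB L i j := by
  -- L has derivative 1
  have hL1 : L.map ratDeriv = 1 := by
    rw [hL]
    ext a b
    rcases eq_or_ne a b with rfl | hab
    · simp [Matrix.map_apply, Matrix.sub_apply, Matrix.smul_apply, Matrix.one_apply_eq,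
        smul_eq_mul, mul_one, ratDeriv_sub, ratDeriv_X, ratDeriv_C]
    · simp [Matrix.map_apply, Matrix.sub_apply, Matrix.smul_apply, Matrix.one_apply_ne hab,
        smul_eq_mul, mul_zero, ratDeriv_sub, ratDeriv_zero, ratDeriv_C, ratDeriv_neg, hab]
  have hLL : L * L⁻¹ = 1 := Matrix.mul_nonsing_inv L hLu
  have hLL' : L⁻¹ * L = 1 := Matrix.nonsing_inv_mul L hLu
  -- derivative of the inverse
  have hinv : (L⁻¹).map ratDeriv = -(L⁻¹ * L⁻¹) := by
    have h := congrArg (fun M => Matrix.map M ratDeriv) hLL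
    simp only [map_ratDeriv_mul, map_ratDeriv_one, hL1, one_mul] at h
    have h2 : L * ((L⁻¹).map ratDeriv) = -(L⁻¹) := eq_neg_of_add_eq_zero_right h
    calc (L⁻¹).map ratDeriv = 1 * ((L⁻¹).map ratDeriv) := (one_mul _).symm
      _ = L⁻¹ * L * ((L⁻¹).map ratDeriv) := by rw [hLL']
      _ = L⁻¹ * (L * ((L⁻¹).map ratDeriv)) := by rw [mul_assoc]
      _ = L⁻¹ * (-(L⁻¹)) := by rw [h2]
      _ = -(L⁻¹ * L⁻¹) := by rw [mul_neg]
  -- CB has constant entries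
  have hCBC : ∀ a b, CB a b = RatFunc.C ((C * B) a b) := by
    intro a b
    rw [hCB, Matrix.mul_apply, Matrix.mul_apply, map_sum]
    exact Finset.sum_congr rfl fun l _ => by simp [Matrix.map_apply, map_mul]
  have hent : ∀ ℓ : ℕ,
      (CB - (((ℓ : ℕ) : RatFunc k) • (1 : Matrix (Fin m) (Fin m) (RatFunc k)))).map ratDeriv
        = 0 := by
    intro ℓ
    ext a b
    rw [Matrix.map_apply, Matrix.sub_apply, Matrix.smul_apply, hCBC a b]
    rcases eq_or_ne a b with rfl | hab
    · simp [Matrix.one_apply_eq, smul_eq_mul, ratDeriv_sub, ratDeriv_C, ratDeriv_natCast]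
    · simp [Matrix.one_apply_ne hab, smul_eq_mul, ratDeriv_sub, ratDeriv_C, ratDeriv_zero]
  -- derivative of a factor
  have hMder : ∀ ℓ : ℕ,
      (((CB - (((ℓ : ℕ) : RatFunc k) • (1 : Matrix (Fin m) (Fin m) (RatFunc k)))) * L⁻¹).map
        ratDeriv)
      = (CB - (((ℓ : ℕ) : RatFunc k) • (1 : Matrix (Fin m) (Fin m) (RatFunc k)))) *
          -(L⁻¹ * L⁻¹) := by
    intro ℓ
    rw [map_ratDeriv_mul, hent ℓ, hinv, zero_mul, zero_add]
  induction j, hij using Nat.le_induction with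
  | base =>
    rw [Lam_succ CB L (le_refl i), Lam_self, one_mul, map_ratDeriv_one, sub_zero, mul_one]
  | succ j hj ih =>
    have hcast : (CB - (((j + 1 : ℕ) : RatFunc k) •
          (1 : Matrix (Fin m) (Fin m) (RatFunc k))))
        = (CB - (((j : ℕ) : RatFunc k) • (1 : Matrix (Fin m) (Fin m) (RatFunc k)))) - 1 := by
      rw [Nat.cast_add, Nat.cast_one, add_smul, one_smul, sub_add_eq_sub_sub]
    rw [Lam_succ CB L (Nat.le_succ_of_le hj), Lam_succ CB L hj, hcast,
      map_ratDeriv_mul, hMder j]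
    rw [Lam_succ CB L hj] at ih
    exact key_ring _ _ _ _ _ ih
end

section
/- Let P ∈ k[x,y] be square-free in y with deg_y P = d_y, P_y = ∂_y P, P_x = ∂_x P. For each root α of P in an algebraic closure of k(x), extend ∂_x by α' = −P_x(x,α)/P_y(x,α). Then for every i ≥ 1 there exists a polynomial C_i ∈ k[x,y], independent of the choice of root, such that α^{(i)} = C_i(x,α)/P_y(x,α)^{2i−1} for every root α of P. -/
open Polynomial

/-- The partial derivative `∂_x P` of a bivariate polynomial `P ∈ k[x][y]`
(`y` being the outer variable). -/
noncomputable def derivX {k : Type*} [Field k] (P : Polynomial (Polynomial k)) :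
    Polynomial (Polynomial k) :=
  P.sum fun i c => Polynomial.C (derivative c) * Polynomial.X ^ i

section DerLemmas
variable {F : Type*} [Field F] {d : F → F}

lemma d_zero (hadd : ∀ a b, d (a + b) = d a + d b) : d 0 = 0 := by
  have h := hadd 0 0
  rw [add_zero] at h
  exact (left_eq_add.mp h)

lemma d_one (hmul : ∀ a b, d (a * b) = d a * b + a * d b) : d 1 = 0 := by
  have h := hmul 1 1
  rw [mul_one, mul_one, one_mul] at h
  exact (left_eq_add.mp h)

lemma d_pow (hmul : ∀ a b, d (a * b) = d a * b + a * d b) (x : F) :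
    ∀ n : ℕ, d (x ^ n) = (n : F) * x ^ (n - 1) * d x := by
  intro n
  induction n with
  | zero => simp [d_one hmul]
  | succ n ih =>
    rcases Nat.eq_zero_or_pos n with h | h
    · subst h; simp
    · rw [pow_succ, hmul, ih]
      have hx : x ^ (n - 1) * x = x ^ n := by
        rw [← pow_succ]; congr 1; omega
      have hn : n + 1 - 1 = n := rfl
      rw [hn]
      push_cast
      calc (↑n : F) * x ^ (n - 1) * d x * x + x ^ n * d x
          = (↑n : F) * (x ^ (n - 1) * x) * d x + x ^ n * d x := by ring
        _ = ((↑n : F) + 1) * x ^ n * d x := by rw [hx]; ring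

lemma d_inv (hmul : ∀ a b, d (a * b) = d a * b + a * d b) {x : F} (hx : x ≠ 0) :
    d x⁻¹ = -(d x) / x ^ 2 := by
  have h := hmul x x⁻¹
  rw [mul_inv_cancel₀ hx, d_one hmul] at h
  field_simp
  field_simp at h
  linear_combination -h

lemma d_div_pow (hmul : ∀ a b, d (a * b) = d a * b + a * d b) {x : F} (hx : x ≠ 0)
    (y : F) (m : ℕ) :
    d (y / x ^ m) = (d y * x - (m : F) * y * d x) / x ^ (m + 1) := by
  rw [div_eq_mul_inv, hmul, d_inv hmul (pow_ne_zero m hx), d_pow hmul]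
  rcases Nat.eq_zero_or_pos m with h | h
  · subst h; simp; field_simp
  · obtain ⟨n, rfl⟩ : ∃ n, m = n + 1 := ⟨m - 1, by omega⟩
    have hn : n + 1 - 1 = n := rfl
    rw [hn]
    field_simp
    ring

end DerLemmas

section Chain
variable {k : Type*} [Field k]

lemma derivX_add (p q : Polynomial (Polynomial k)) :
    derivX (p + q) = derivX p + derivX q := by
  unfold derivX
  rw [Polynomial.sum_add_index] <;> intros <;> simp [add_mul]

lemma derivX_monomial (n : ℕ) (c : Polynomial k) :
    derivX (Polynomial.monomial n c) = Polynomial.C (derivative c) * Polynomial.X ^ n := by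
  unfold derivX
  rw [Polynomial.sum_monomial_index]
  simp

variable {d : AlgebraicClosure (RatFunc k) → AlgebraicClosure (RatFunc k)}

lemma d_const
    (hext : ∀ f : RatFunc k,
      d (algebraMap (RatFunc k) (AlgebraicClosure (RatFunc k)) f) =
        algebraMap (RatFunc k) (AlgebraicClosure (RatFunc k)) (ratDeriv f))
    (c : Polynomial k) :
    d (algebraMap (RatFunc k) (AlgebraicClosure (RatFunc k))
        (algebraMap (Polynomial k) (RatFunc k) c)) =
      algebraMap (RatFunc k) (AlgebraicClosure (RatFunc k))
        (algebraMap (Polynomial k) (RatFunc k) (derivative c)) := by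
  rw [hext]
  congr 1
  unfold ratDeriv
  rw [RatFunc.num_algebraMap, RatFunc.denom_algebraMap]
  simp

lemma chain_rule
    (hadd : ∀ a b, d (a + b) = d a + d b)
    (hmul : ∀ a b, d (a * b) = d a * b + a * d b)
    (hext : ∀ f : RatFunc k,
      d (algebraMap (RatFunc k) (AlgebraicClosure (RatFunc k)) f) =
        algebraMap (RatFunc k) (AlgebraicClosure (RatFunc k)) (ratDeriv f))
    (α : AlgebraicClosure (RatFunc k)) (R : Polynomial (Polynomial k)) :
    d (Polynomial.aeval α (R.map (algebraMap (Polynomial k) (RatFunc k)))) =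
      Polynomial.aeval α ((derivX R).map (algebraMap (Polynomial k) (RatFunc k))) +
      Polynomial.aeval α ((derivative R).map (algebraMap (Polynomial k) (RatFunc k))) * d α := by
  induction R using Polynomial.induction_on' with
  | add p q hp hq =>
    rw [derivX_add, derivative_add]
    simp only [Polynomial.map_add, map_add, hadd, hp, hq]
    ring
  | monomial n c =>
    rw [derivX_monomial, derivative_monomial]
    simp only [Polynomial.map_monomial, Polynomial.map_mul, Polynomial.map_C,
      Polynomial.map_pow, Polynomial.map_X, aeval_monomial, map_mul, aeval_C, map_pow, aeval_X]
    rw [hmul, d_const hext, d_pow hmul]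
    simp only [map_mul, map_natCast]
    ring

end Chain

/-- For `P ∈ k[x,y]` square-free in `y`, and any derivation `d` on the algebraic closure of
`k(x)` extending `∂_x`, for every `i ≥ 1` there is a polynomial `C_i ∈ k[x,y]`, independent
of the root, such that `α^{(i)} = C_i(x,α)/P_y(x,α)^{2i-1}` for every root `α` of `P`. -/
theorem algebraic_derivative_formula (k : Type*) [Field k] [CharZero k]
    (P : Polynomial (Polynomial k)) (hP0 : P ≠ 0)
    (hsf : IsCoprime (P.map (algebraMap (Polynomial k) (RatFunc k)))
      (derivative (P.map (algebraMap (Polynomial k) (RatFunc k)))))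
    (d : AlgebraicClosure (RatFunc k) → AlgebraicClosure (RatFunc k))
    (hadd : ∀ a b, d (a + b) = d a + d b)
    (hmul : ∀ a b, d (a * b) = d a * b + a * d b)
    (hext : ∀ f : RatFunc k,
      d (algebraMap (RatFunc k) (AlgebraicClosure (RatFunc k)) f) =
        algebraMap (RatFunc k) (AlgebraicClosure (RatFunc k)) (ratDeriv f)) :
    ∀ i : ℕ, 1 ≤ i → ∃ Ci : Polynomial (Polynomial k),
      ∀ α : AlgebraicClosure (RatFunc k),
        Polynomial.aeval α (P.map (algebraMap (Polynomial k) (RatFunc k))) = 0 →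
        d^[i] α =
          Polynomial.aeval α (Ci.map (algebraMap (Polynomial k) (RatFunc k))) /
            (Polynomial.aeval α
              (derivative (P.map (algebraMap (Polynomial k) (RatFunc k))))) ^ (2 * i - 1) := by
  have hDne : ∀ α : AlgebraicClosure (RatFunc k),
      Polynomial.aeval α (P.map (algebraMap (Polynomial k) (RatFunc k))) = 0 →
      Polynomial.aeval α ((derivative P).map (algebraMap (Polynomial k) (RatFunc k))) ≠ 0 := by
    intro α hα h0
    obtain ⟨a, b, hab⟩ := hsf
    have h1 := congrArg (Polynomial.aeval α) hab
    rw [Polynomial.derivative_map] at h1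
    simp [hα, h0] at h1
  intro i hi
  induction i, hi using Nat.le_induction with
  | base =>
    refine ⟨-derivX P, fun α hα => ?_⟩
    have hc := chain_rule hadd hmul hext α P
    rw [hα, d_zero hadd] at hc
    have hD := hDne α hα
    rw [Polynomial.derivative_map]
    simp only [Function.iterate_one, Polynomial.map_neg, map_neg, pow_one,
      show 2 * 1 - 1 = 1 from rfl]
    rw [eq_div_iff hD]
    linear_combination -hc
  | succ i hi ih =>
    obtain ⟨Ci, hCi⟩ := ih
    refine ⟨derivX Ci * derivative P * derivative P
      - derivative Ci * derivX P * derivative P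
      - ((2 * i - 1 : ℕ) : Polynomial (Polynomial k)) *
          (Ci * (derivX (derivative P) * derivative P
            - derivative (derivative P) * derivX P)), fun α hα => ?_⟩
    have hD := hDne α hα
    have hroot := chain_rule hadd hmul hext α P
    rw [hα, d_zero hadd] at hroot
    have hN := chain_rule hadd hmul hext α Ci
    have hDd := chain_rule hadd hmul hext α (derivative P)
    have hiter := hCi α hα
    rw [Polynomial.derivative_map] at hiter ⊢
    rw [Function.iterate_succ_apply', hiter, d_div_pow hmul hD, hN, hDd]
    have he : 2 * (i + 1) - 1 = (2 * i - 1) + 2 := by omega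
    rw [he]
    simp only [Polynomial.map_sub, Polynomial.map_mul, Polynomial.map_natCast, map_sub, map_mul,
      map_natCast]
    set A := Polynomial.aeval α ((derivX Ci).map (algebraMap (Polynomial k) (RatFunc k))) with hA
    set B := Polynomial.aeval α ((derivative Ci).map (algebraMap (Polynomial k) (RatFunc k)))
    set E := Polynomial.aeval α ((derivX P).map (algebraMap (Polynomial k) (RatFunc k)))
    set F := Polynomial.aeval α
      ((derivX (derivative P)).map (algebraMap (Polynomial k) (RatFunc k)))
    set G := Polynomial.aeval α
      ((derivative (derivative P)).map (algebraMap (Polynomial k) (RatFunc k)))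
    set N := Polynomial.aeval α (Ci.map (algebraMap (Polynomial k) (RatFunc k)))
    set D := Polynomial.aeval α ((derivative P).map (algebraMap (Polynomial k) (RatFunc k)))
    rw [div_eq_div_iff (pow_ne_zero _ hD) (pow_ne_zero _ hD)]
    linear_combination (-(D ^ (2 * i - 1 + 1)) * (B * D - ((2 * i - 1 : ℕ) : AlgebraicClosure (RatFunc k)) * N * G)) * hroot
end
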